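/- arXiv:2108.04011 — 5 statements merged into one kernel-verified Lean document; each statement's English description precedes it below -/
import Mathlib

section
/- The constant configuration 𝟏 is the unique global minimum of the Hamiltonian H: for every configuration σ ≠ 𝟏 one has H(σ) > H(𝟏); equivalently, the stable set X^s (the set of global minima of H) equals {𝟏}. -/
/-!
Metastability for the q-state Potts model with positive external magnetic field
on the K × L torus, under Glauber (single-spin-flip) dynamics.
-/

namespace PottsPos

/-- Vertices of the `K × L` torus (periodic boundary conditions). -/
abbrev Vtx (K L : ℕ) := ZMod K × ZMod L

/-- Spin configurations; spins are natural numbers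
(valid configurations take values in `{1,…,q}`). -/
abbrev Cfg (K L : ℕ) := Vtx K L → ℕ

/-- `σ` is a genuine `q`-state Potts configuration: all spins lie in `{1,…,q}`. -/
def IsConf (q K L : ℕ) (σ : Cfg K L) : Prop := ∀ v, 1 ≤ σ v ∧ σ v ≤ q

/-- The constant configuration with all spins equal to `s`. -/
def const (K L s : ℕ) : Cfg K L := fun _ => s

/-- Nearest-neighbour adjacency on the torus. -/
def Adj (K L : ℕ) (v w : Vtx K L) : Prop :=
  w = (v.1 + 1, v.2) ∨ w = (v.1 - 1, v.2) ∨ w = (v.1, v.2 + 1) ∨ w = (v.1, v.2 - 1)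

/-- The Hamiltonian
`H(σ) = −Σ_{(v,w)∈E} 1{σ(v)=σ(w)} − h·Σ_{v∈Λ} 1{σ(v)=1}`,
where each torus edge is counted once via its "forward" endpoints. -/
noncomputable def energy (K L : ℕ) [NeZero K] [NeZero L] (h : ℝ) (σ : Cfg K L) : ℝ :=
  -(∑ v : Vtx K L, ((if σ v = σ (v.1 + 1, v.2) then (1 : ℝ) else 0)
      + (if σ v = σ (v.1, v.2 + 1) then (1 : ℝ) else 0)))
    - h * ∑ v : Vtx K L, (if σ v = 1 then (1 : ℝ) else 0)

/-- Two configurations communicate iff they differ at exactly one vertex. -/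
def Communicates (K L : ℕ) (σ σ' : Cfg K L) : Prop :=
  ∃ v, σ v ≠ σ' v ∧ ∀ w, w ≠ v → σ w = σ' w

/-- `ω` is a path from `σ` to `σ'` in the space of valid configurations:
a nonempty finite sequence starting at `σ`, ending at `σ'`,
in which consecutive configurations communicate. -/
def IsPath (q K L : ℕ) (σ σ' : Cfg K L) (ω : List (Cfg K L)) : Prop :=
  ω.head? = some σ ∧ ω.getLast? = some σ' ∧ ω.Chain' (Communicates K L) ∧
    ∀ η ∈ ω, IsConf q K L η

/-- The height of a path: the maximal energy along it. -/
noncomputable def height (K L : ℕ) [NeZero K] [NeZero L] (h : ℝ)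
    (ω : List (Cfg K L)) : ℝ :=
  sSup (energy K L h '' {η | η ∈ ω})

/-- The communication height `Φ(σ,σ')`: minimal height over all paths `σ → σ'`. -/
noncomputable def Phi (q K L : ℕ) [NeZero K] [NeZero L] (h : ℝ) (σ σ' : Cfg K L) : ℝ :=
  sInf (height K L h '' {ω | IsPath q K L σ σ' ω})

/-- The communication height `Φ(σ,A) = min_{σ'∈A} Φ(σ,σ')`. -/
noncomputable def PhiSet (q K L : ℕ) [NeZero K] [NeZero L] (h : ℝ) (σ : Cfg K L)
    (A : Set (Cfg K L)) : ℝ :=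
  sInf (Phi q K L h σ '' A)

/-- Optimal paths from `σ` to `σ'`: paths whose height equals `Φ(σ,σ')`. -/
def IsOptPath (q K L : ℕ) [NeZero K] [NeZero L] (h : ℝ) (σ σ' : Cfg K L)
    (ω : List (Cfg K L)) : Prop :=
  IsPath q K L σ σ' ω ∧ height K L h ω = Phi q K L h σ σ'

/-- Optimal paths from `σ` to the set `A`: paths from `σ` to some element of `A`
whose height equals `Φ(σ,A)`. -/
def IsOptPathSet (q K L : ℕ) [NeZero K] [NeZero L] (h : ℝ) (σ : Cfg K L)
    (A : Set (Cfg K L)) (ω : List (Cfg K L)) : Prop :=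
  ∃ σ' ∈ A, IsPath q K L σ σ' ω ∧ height K L h ω = PhiSet q K L h σ A

/-- The stability level `V_σ = Φ(σ, I_σ) − H(σ)`, `I_σ = {η : H(η) < H(σ)}`. -/
noncomputable def stabLevel (q K L : ℕ) [NeZero K] [NeZero L] (h : ℝ)
    (σ : Cfg K L) : ℝ :=
  PhiSet q K L h σ {η | IsConf q K L η ∧ energy K L h η < energy K L h σ}
    - energy K L h σ

/-- The stable set `X^s`: global minima of the Hamiltonian. -/
def stableSet (q K L : ℕ) [NeZero K] [NeZero L] (h : ℝ) : Set (Cfg K L) :=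
  {σ | IsConf q K L σ ∧ ∀ η, IsConf q K L η → energy K L h σ ≤ energy K L h η}

/-- The metastable set `X^m`: non-stable states of maximal stability level. -/
noncomputable def metastableSet (q K L : ℕ) [NeZero K] [NeZero L] (h : ℝ) :
    Set (Cfg K L) :=
  {σ | IsConf q K L σ ∧ σ ∉ stableSet q K L h ∧
    stabLevel q K L h σ =
      sSup {t | ∃ η, IsConf q K L η ∧ η ∉ stableSet q K L h ∧ stabLevel q K L h η = t}}

/-- The critical length `ℓ* = ⌈2/h⌉`. -/
noncomputable def ellStar (h : ℝ) : ℕ := ⌈(2 : ℝ) / h⌉₊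

/-- The energy barrier `Γ = 4ℓ* − h(ℓ*(ℓ*−1)+1)`. -/
noncomputable def Gamma (h : ℝ) : ℝ :=
  4 * (ellStar h : ℝ) - h * ((ellStar h : ℝ) * ((ellStar h : ℝ) - 1) + 1)

/-- `W` is a gate for the transition `σ → A`: every configuration of `W` lies on some
optimal path from `σ` to `A` at energy `Φ(σ,A)`, and every optimal path from `σ`
to `A` visits `W`. -/
def IsGate (q K L : ℕ) [NeZero K] [NeZero L] (h : ℝ) (σ : Cfg K L)
    (A W : Set (Cfg K L)) : Prop :=
  (∀ η ∈ W, ∃ ω, IsOptPathSet q K L h σ A ω ∧ η ∈ ω ∧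
      energy K L h η = PhiSet q K L h σ A) ∧
  ∀ ω, IsOptPathSet q K L h σ A ω → ∃ η ∈ W, η ∈ ω

/-- A minimal gate: a gate no proper subset of which is a gate. -/
def IsMinimalGate (q K L : ℕ) [NeZero K] [NeZero L] (h : ℝ) (σ : Cfg K L)
    (A W : Set (Cfg K L)) : Prop :=
  IsGate q K L h σ A W ∧ ∀ W', W' ⊂ W → ¬ IsGate q K L h σ A W'

/-- A `p × r` rectangle (p rows, r columns) on the torus with base point `(x,y)`. -/
def rect (K L : ℕ) (x : ZMod K) (y : ZMod L) (p r : ℕ) : Set (Vtx K L) :=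
  {v | ∃ i j : ℕ, i < p ∧ j < r ∧ v = (x + (i : ZMod K), y + (j : ZMod L))}

/-- `A` is an `a × b` rectangle on the torus (in either orientation). -/
def IsRect (K L : ℕ) (A : Set (Vtx K L)) (a b : ℕ) : Prop :=
  ∃ x y, A = rect K L x y a b ∨ A = rect K L x y b a

/-- `R̄_{a,b}(r,s)`: configurations equal to `r` everywhere except on an
`a × b` rectangle where they equal `s`. -/
def Rbar (K L a b r s : ℕ) : Set (Cfg K L) :=
  {σ | ∃ A, IsRect K L A a b ∧ (∀ v ∈ A, σ v = s) ∧ ∀ v ∉ A, σ v = r}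

/-- A horizontal bar of `l` cells in row `x`, starting at column `y`. -/
def hbar (K L : ℕ) (x : ZMod K) (y : ZMod L) (l : ℕ) : Set (Vtx K L) :=
  {v | ∃ j : ℕ, j < l ∧ v = (x, y + (j : ZMod L))}

/-- A vertical bar of `l` cells in column `y`, starting at row `x`. -/
def vbar (K L : ℕ) (x : ZMod K) (y : ZMod L) (l : ℕ) : Set (Vtx K L) :=
  {v | ∃ j : ℕ, j < l ∧ v = (x + (j : ZMod K), y)}

/-- `A` is an `a × b` rectangle together with a `1 × l` bar adjacent to one of the
sides of length `b` (in either orientation of the rectangle). -/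
def IsRectWithBar (K L : ℕ) (A : Set (Vtx K L)) (a b l : ℕ) : Prop :=
  ∃ (x : ZMod K) (y : ZMod L) (j0 : ℕ), j0 + l ≤ b ∧
    (A = rect K L x y a b ∪ hbar K L (x + (a : ZMod K)) (y + (j0 : ZMod L)) l ∨
     A = rect K L x y a b ∪ hbar K L (x - 1) (y + (j0 : ZMod L)) l ∨
     A = rect K L x y b a ∪ vbar K L (x + (j0 : ZMod K)) (y + (a : ZMod L)) l ∨
     A = rect K L x y b a ∪ vbar K L (x + (j0 : ZMod K)) (y - 1) l)

/-- `B̄^l_{a,b}(r,s)`: configurations equal to `r` everywhere except on an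
`a × b` rectangle with a `1 × l` bar attached to a side of length `b`,
where they equal `s`. -/
def Bbar (K L a b l r s : ℕ) : Set (Cfg K L) :=
  {σ | ∃ A, IsRectWithBar K L A a b l ∧ (∀ v ∈ A, σ v = s) ∧ ∀ v ∉ A, σ v = r}

/-- Connectedness of a set of vertices under torus adjacency. -/
def ConnSet (K L : ℕ) (C : Set (Vtx K L)) : Prop :=
  ∀ u ∈ C, ∀ w ∈ C, ∃ γ : List (Vtx K L), γ.head? = some u ∧ γ.getLast? = some w ∧
    γ.Chain' (Adj K L) ∧ ∀ v ∈ γ, v ∈ C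

/-- The perimeter of a set of vertices: the number of torus edges joining it
to its complement. -/
noncomputable def perimeter (K L : ℕ) (C : Set (Vtx K L)) : ℕ :=
  Set.ncard {p : Vtx K L × Vtx K L | Adj K L p.1 p.2 ∧ p.1 ∈ C ∧ p.2 ∉ C}

/-- The external boundary `∂C` of a set of configurations. -/
def extBoundary (q K L : ℕ) (C : Set (Cfg K L)) : Set (Cfg K L) :=
  {η | IsConf q K L η ∧ η ∉ C ∧ ∃ σ ∈ C, Communicates K L σ η}

/-- Connectedness of a set of configurations under single-spin updates. -/
def ConnCfg (q K L : ℕ) (C : Set (Cfg K L)) : Prop :=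
  ∀ σ ∈ C, ∀ η ∈ C, ∃ ω, IsPath q K L σ η ω ∧ ∀ ξ ∈ ω, ξ ∈ C

/-- A cycle: a nonempty set of configurations which is either a singleton, or is
connected with `max H` inside strictly below `min H` on the external boundary. -/
def IsCycle (q K L : ℕ) [NeZero K] [NeZero L] (h : ℝ) (C : Set (Cfg K L)) : Prop :=
  C.Nonempty ∧ (∀ σ ∈ C, IsConf q K L σ) ∧
    ((∃ σ, C = {σ}) ∨
      (ConnCfg q K L C ∧
        sSup (energy K L h '' C) < sInf (energy K L h '' extBoundary q K L C)))

open Classical in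
/-- The depth of a cycle: `0` for singletons, otherwise
`min H on ∂C − min H on C`. -/
noncomputable def depth (q K L : ℕ) [NeZero K] [NeZero L] (h : ℝ)
    (C : Set (Cfg K L)) : ℝ :=
  if ∃ σ, C = {σ} then 0
  else sInf (energy K L h '' extBoundary q K L C) - sInf (energy K L h '' C)

/-- `D^m`: configurations with exactly `KL − (ℓ*(ℓ*−1)+1)` spins equal to `m`. -/
def Dm (q K L : ℕ) (h : ℝ) (m : ℕ) : Set (Cfg K L) :=
  {σ | IsConf q K L σ ∧
    Set.ncard {v | σ v = m} = K * L - (ellStar h * (ellStar h - 1) + 1)}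

/-- `F(D^m)`: the minimizers of the energy on `D^m`. -/
def FDm (q K L : ℕ) [NeZero K] [NeZero L] (h : ℝ) (m : ℕ) : Set (Cfg K L) :=
  {σ | σ ∈ Dm q K L h m ∧ ∀ η ∈ Dm q K L h m, energy K L h σ ≤ energy K L h η}

/-- `n_s(v)`: the number of nearest neighbours of `v` whose spin in `σ` is `s`. -/
noncomputable def nnbr (K L : ℕ) (σ : Cfg K L) (v : Vtx K L) (s : ℕ) : ℕ :=
  Set.ncard {w | Adj K L v w ∧ σ w = s}


/-!
Each of the `2KL` torus bonds contributes at least `-1` to `H` and each vertex of spin `1`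
contributes `-h`. The configuration `𝟏` attains both bounds, while any other configuration has a
vertex of spin `≠ 1`, so its energy exceeds `H(𝟏)` by at least `h > 0`.
-/

section Energy

variable {K L : ℕ} [NeZero K] [NeZero L]

noncomputable def agreeingBonds (σ : Cfg K L) : ℝ :=
  ∑ v : Vtx K L, ((if σ v = σ (v.1 + 1, v.2) then (1 : ℝ) else 0)
      + (if σ v = σ (v.1, v.2 + 1) then (1 : ℝ) else 0))

noncomputable def spinOneCount (σ : Cfg K L) : ℝ :=
  ∑ v : Vtx K L, (if σ v = 1 then (1 : ℝ) else 0)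

lemma energy_eq (h : ℝ) (σ : Cfg K L) :
    energy K L h σ = -agreeingBonds σ - h * spinOneCount σ := rfl

lemma agreeingBonds_le (σ : Cfg K L) :
    agreeingBonds σ ≤ 2 * Fintype.card (Vtx K L) := by
  calc agreeingBonds σ ≤ ∑ _v : Vtx K L, (2 : ℝ) := by
        refine Finset.sum_le_sum fun v _ => ?_
        split_ifs <;> norm_num
    _ = 2 * Fintype.card (Vtx K L) := by simp [mul_comm]

lemma agreeingBonds_const (s : ℕ) :
    agreeingBonds (const K L s) = 2 * Fintype.card (Vtx K L) := by
  simp only [agreeingBonds, const, if_true, Finset.sum_const, Finset.card_univ, nsmul_eq_mul]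
  ring

lemma spinOneCount_const_one : spinOneCount (const K L 1) = Fintype.card (Vtx K L) := by
  simp [spinOneCount, const]

lemma spinOneCount_le_of_ne_const_one {σ : Cfg K L} (hσ : σ ≠ const K L 1) :
    spinOneCount σ ≤ Fintype.card (Vtx K L) - 1 := by
  obtain ⟨v₀, hv₀⟩ : ∃ v, σ v ≠ 1 := by
    by_contra! hall
    exact hσ (funext hall)
  calc spinOneCount σ ≤ ∑ v : Vtx K L, ((1 : ℝ) - if v = v₀ then 1 else 0) := by
        refine Finset.sum_le_sum fun v _ => ?_
        by_cases hv : v = v₀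
        · subst hv; simp [hv₀]
        · simp only [hv, if_false, sub_zero]; split_ifs <;> norm_num
    _ = Fintype.card (Vtx K L) - 1 := by simp [Finset.sum_sub_distrib]

lemma energy_const_one_add_le {h : ℝ} (hh : 0 ≤ h) {σ : Cfg K L} (hσ : σ ≠ const K L 1) :
    energy K L h (const K L 1) + h ≤ energy K L h σ := by
  rw [energy_eq, energy_eq, agreeingBonds_const, spinOneCount_const_one]
  have hbonds := agreeingBonds_le σ
  have hones := mul_le_mul_of_nonneg_left (spinOneCount_le_of_ne_const_one hσ) hh
  linarith

end Energy

lemma stableSet_eq_singleton {q K L : ℕ} [NeZero K] [NeZero L] {h : ℝ} {σ₀ : Cfg K L}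
    (hσ₀ : IsConf q K L σ₀)
    (hmin : ∀ σ, IsConf q K L σ → σ ≠ σ₀ → energy K L h σ₀ < energy K L h σ) :
    stableSet q K L h = {σ₀} := by
  ext σ
  constructor
  · rintro ⟨hσ, hle⟩
    by_contra hne
    exact (hle σ₀ hσ₀).not_gt (hmin σ hσ hne)
  · rintro rfl
    refine ⟨hσ₀, fun η hη => ?_⟩
    rcases eq_or_ne η σ with rfl | hne
    · exact le_rfl
    · exact (hmin η hη hne).le

theorem stable_state_unique_general (q K L : ℕ) [NeZero K] [NeZero L] (h : ℝ)
    (hq : 2 < q) (hh0 : 0 < h) :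
    (∀ σ : Cfg K L, IsConf q K L σ → σ ≠ const K L 1 →
      energy K L h (const K L 1) < energy K L h σ) ∧
    stableSet q K L h = {const K L 1} := by
  have hconst : IsConf q K L (const K L 1) := fun _ => ⟨le_rfl, by unfold const; omega⟩
  have hmin : ∀ σ : Cfg K L, IsConf q K L σ → σ ≠ const K L 1 →
      energy K L h (const K L 1) < energy K L h σ := fun σ _ hσ => by
    linarith [energy_const_one_add_le hh0.le hσ]
  exact ⟨hmin, stableSet_eq_singleton hconst hmin⟩

/-- the constant configuration `𝟏` is the unique global minimum of `H`;
equivalently, the stable set equals `{𝟏}`. -/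
theorem stable_state_unique (q K L : ℕ) [NeZero K] [NeZero L] (h : ℝ)
    (hq : 2 < q) (hh0 : 0 < h) (hh1 : h < 1)
    (hhint : ¬ ∃ n : ℤ, (2 : ℝ) / h = (n : ℝ))
    (hK : 3 * ellStar h ≤ K) (hKL : K ≤ L) :
    (∀ σ : Cfg K L, IsConf q K L σ → σ ≠ const K L 1 →
      energy K L h (const K L 1) < energy K L h σ) ∧
    stableSet q K L h = {const K L 1} :=
  stable_state_unique_general q K L h hq hh0

end PottsPos
end

section
/- Upper bound for the communication height: for every m ∈ {2,…,q}, Φ(𝐦, 𝟏) − H(𝐦) ≤ 4ℓ* − h(ℓ*(ℓ*−1)+1). -/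
/-!
Metastability for the q-state Potts model with positive external magnetic field
on the K × L torus, under Glauber (single-spin-flip) dynamics.
-/

namespace PottsPos

/-!
Grow a droplet of ones in the sea of `m` one cell at a time through the quasi-squares
`a × a`, `a × (a + 1)`, `(a + 1) × (a + 1)`, … up to the `K × K` square, then fill the
remaining columns of the torus. Every configuration on the way is a staircase of columns, whose
energy above `H(m)` is at most perimeter minus `h` times area, hence at most the energy
`2(a + b) + 2 - h(ab + 1)` of an `a × b` quasi-square with a protuberance. Extending a side of
length `c` changes that energy by `2 - hc`, which is positive exactly for `c < 2/h`, so the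
maximum over quasi-squares is attained at `(ℓ* - 1) × ℓ*`, where it equals `Γ`.
-/

open Finset

section Counting

variable {n : ℕ} [NeZero n]

theorem sum_zmod_val {M : Type*} [AddCommMonoid M] (f : ℕ → M) :
    ∑ x : ZMod n, f x.val = ∑ j ∈ range n, f j := by
  obtain ⟨k, rfl⟩ := Nat.exists_eq_succ_of_ne_zero (NeZero.ne n)
  exact Fin.sum_univ_eq_sum_range f (k + 1)

theorem val_add_one_eq_mod (x : ZMod n) : (x + 1).val = (x.val + 1) % n := by
  rw [show x + 1 = ((x.val + 1 : ℕ) : ZMod n) by simp, ZMod.val_natCast]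

theorem card_filter_eq_card_sub_card_filter_not {α : Type*} (s : Finset α) (p : α → Prop)
    [DecidablePred p] : ((s.filter p).card : ℝ) = s.card - (s.filter (¬ p ·)).card := by
  rw [← card_filter_add_card_filter_not (s := s) p]; push_cast; ring

theorem sum_ite_val_lt {c : ℕ} (hc : c ≤ n) :
    ∑ x : ZMod n, (if x.val < c then (1 : ℝ) else 0) = c := by
  rw [sum_zmod_val (fun j => if j < c then (1 : ℝ) else 0), sum_boole,
    show (range n).filter (· < c) = range c by ext j; simp; omega, card_range]

theorem sum_ite_val_lt_iff_val_lt {a b : ℕ} (ha : a ≤ n) (hb : b ≤ n) :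
    ∑ x : ZMod n, (if x.val < a ↔ x.val < b then (1 : ℝ) else 0) = n - Nat.dist a b := by
  rw [sum_zmod_val (fun j => if j < a ↔ j < b then (1 : ℝ) else 0), sum_boole,
    card_filter_eq_card_sub_card_filter_not, card_range,
    show (range n).filter (fun j => ¬(j < a ↔ j < b)) = Ico (min a b) (max a b) by
      ext j; simp only [mem_filter, mem_range, mem_Ico]; omega, Nat.card_Ico]
  congr 1; norm_cast; unfold Nat.dist; omega

theorem sum_ite_val_lt_iff_succ_mod_lt {c : ℕ} (hc : c ≤ n) :
    ∑ x : ZMod n, (if x.val < c ↔ (x.val + 1) % n < c then (1 : ℝ) else 0)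
      = n - if 0 < c ∧ c < n then 2 else 0 := by
  rw [sum_zmod_val (fun j => if j < c ↔ (j + 1) % n < c then (1 : ℝ) else 0), sum_boole,
    card_filter_eq_card_sub_card_filter_not, card_range]
  have hmem : ∀ j, j ∈ (range n).filter (fun j => ¬(j < c ↔ (j + 1) % n < c)) ↔
      (0 < c ∧ c < n) ∧ (j = c - 1 ∨ j = n - 1) := by
    intro j
    simp only [mem_filter, mem_range]
    rcases lt_trichotomy (j + 1) n with hj | hj | hj
    · rw [Nat.mod_eq_of_lt hj]; omega
    · rw [hj, Nat.mod_self]; omega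
    · omega
  split_ifs with hmid
  · rw [show (range n).filter (fun j => ¬(j < c ↔ (j + 1) % n < c)) = {c - 1, n - 1} by
      ext j; simp [hmem, hmid], card_pair (by omega)]
    norm_num
  · rw [show (range n).filter (fun j => ¬(j < c ↔ (j + 1) % n < c)) = ∅ by
      ext j; simp [hmem, hmid]]
    simp

end Counting

section ProfileEnergy

theorem ite_spin_eq_ite_spin {m : ℕ} (hm : m ≠ 1) (P Q : Prop) [Decidable P] [Decidable Q] :
    (if (if P then 1 else m) = (if Q then 1 else m) then (1 : ℝ) else 0)
      = if P ↔ Q then 1 else 0 := by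
  by_cases P <;> by_cases Q <;> simp_all [Ne.symm hm]

theorem ite_spin_eq_one {m : ℕ} (hm : m ≠ 1) (P : Prop) [Decidable P] :
    (if (if P then 1 else m) = 1 then (1 : ℝ) else 0) = if P then 1 else 0 := by
  by_cases P <;> simp_all

variable {K L : ℕ} [NeZero K] [NeZero L]

theorem sum_vtx_eq_sum_range (f : ZMod K → ℕ → ℝ) :
    ∑ v : Vtx K L, f v.1 v.2.val = ∑ j ∈ range L, ∑ x : ZMod K, f x j := by
  rw [Fintype.sum_prod_type_right]
  exact sum_zmod_val (fun j => ∑ x, f x j)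

def profileCfg (K L m : ℕ) (g : ℕ → ℕ) : Cfg K L :=
  fun v => if v.1.val < g v.2.val then 1 else m

theorem energy_profileCfg (h : ℝ) {m : ℕ} (hm : m ≠ 1) {g : ℕ → ℕ} (hg : ∀ j, g j ≤ K) :
    energy K L h (profileCfg K L m g) = -(2 * K * L)
      + ∑ j ∈ range L, (if 0 < g j ∧ g j < K then (2 : ℝ) else 0)
      + ∑ j ∈ range L, (Nat.dist (g j) (g ((j + 1) % L)) : ℝ)
      - h * ∑ j ∈ range L, (g j : ℝ) := by
  unfold energy profileCfg
  simp only [ite_spin_eq_ite_spin hm, ite_spin_eq_one hm, val_add_one_eq_mod]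
  rw [sum_vtx_eq_sum_range (fun x j => (if x.val < g j ↔ (x.val + 1) % K < g j then 1 else 0)
      + if x.val < g j ↔ x.val < g ((j + 1) % L) then 1 else 0),
    sum_vtx_eq_sum_range (fun x j => if x.val < g j then 1 else 0)]
  simp only [sum_add_distrib, sum_ite_val_lt_iff_succ_mod_lt (hg _),
    sum_ite_val_lt_iff_val_lt (hg _) (hg _), sum_ite_val_lt (hg _), sum_sub_distrib, sum_const,
    card_range, nsmul_eq_mul]
  ring

end ProfileEnergy

section Staircase

def stair (p u r v : ℕ) : ℕ → ℕ := fun j => if j < p then u else if j < r then v else 0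

theorem sum_range_stair {L p u r v : ℕ} (F : ℕ → ℝ) (hF : F 0 = 0) (hpr : p ≤ r) (hrL : r ≤ L) :
    ∑ j ∈ range L, F (stair p u r v j) = p * F u + ((r : ℝ) - p) * F v := by
  have hsplit : ∀ j, F (stair p u r v j)
      = (if j ∈ range p then 1 else 0) * F u + (if j ∈ Ico p r then 1 else 0) * F v := by
    intro j; simp only [stair, mem_range, mem_Ico]; split_ifs <;> simp [hF] <;> omega
  rw [sum_congr rfl fun j _ => hsplit j, sum_add_distrib, ← sum_mul, ← sum_mul, sum_boole,
    sum_boole, show (range L).filter (· ∈ range p) = range p by ext j; simp; omega,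
    show (range L).filter (· ∈ Ico p r) = Ico p r by ext j; simp; omega, card_range,
    Nat.card_Ico, Nat.cast_sub hpr]

theorem sum_dist_le_of_antitone {L : ℕ} (hL : 0 < L) {g : ℕ → ℕ} (hg : Antitone g) :
    ∑ j ∈ range L, Nat.dist (g j) (g ((j + 1) % L)) ≤ 2 * g 0 := by
  obtain ⟨L, rfl⟩ := Nat.exists_eq_add_of_lt hL
  have htelescope : ∀ n, ∑ j ∈ range n, Nat.dist (g j) (g (j + 1)) = g 0 - g n := by
    intro n
    induction n with
    | zero => simp
    | succ n ih =>
      rw [sum_range_succ, ih, Nat.dist_eq_sub_of_le_right (hg (Nat.le_add_right n 1))]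
      have := hg (Nat.le_add_right n 1); have := hg (Nat.zero_le n); omega
  rw [zero_add, sum_range_succ, sum_congr rfl fun j hj => by
      rw [Nat.mod_eq_of_lt (by simp at hj; omega)], htelescope, Nat.mod_self,
    Nat.dist_eq_sub_of_le (hg (Nat.zero_le L))]
  omega

variable {K L : ℕ} [NeZero K] [NeZero L] (h : ℝ) {m : ℕ}

theorem energy_profileCfg_stair_le (hm : m ≠ 1) {p u r v : ℕ} (hpr : p ≤ r) (hrL : r ≤ L)
    (hvu : v ≤ u) (huK : u ≤ K) :
    energy K L h (profileCfg K L m (stair p u r v)) ≤ -(2 * K * L)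
      + 2 * (if u < K then (p : ℝ) else 0) + 2 * ((r : ℝ) - p) + 2 * u
      - h * (p * u + ((r : ℝ) - p) * v) := by
  have hstair_le : ∀ j, stair p u r v j ≤ u := fun j => by unfold stair; split_ifs <;> omega
  have hanti : Antitone (stair p u r v) := fun i j hij => by unfold stair; split_ifs <;> omega
  have hdist : (∑ j ∈ range L, (Nat.dist (stair p u r v j) (stair p u r v ((j + 1) % L)) : ℝ))
      ≤ 2 * u := by
    exact_mod_cast (sum_dist_le_of_antitone (Nat.pos_of_ne_zero (NeZero.ne L)) hanti).trans
      (Nat.mul_le_mul_left 2 (hstair_le 0))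
  rw [energy_profileCfg h hm fun j => (hstair_le j).trans huK,
    sum_range_stair (fun c => if 0 < c ∧ c < K then (2 : ℝ) else 0) (by simp) hpr hrL,
    sum_range_stair (fun c => (c : ℝ)) Nat.cast_zero hpr hrL]
  have hrp : (0 : ℝ) ≤ r - p := by rw [sub_nonneg]; exact_mod_cast hpr
  have hcol_u : (p : ℝ) * (if 0 < u ∧ u < K then 2 else 0) ≤ 2 * if u < K then (p : ℝ) else 0 := by
    split_ifs <;> first | omega | linarith [(Nat.cast_nonneg p : (0 : ℝ) ≤ p)]
  have hcol_v : ((r : ℝ) - p) * (if 0 < v ∧ v < K then 2 else 0) ≤ 2 * ((r : ℝ) - p) := by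
    split_ifs <;> linarith
  linarith

end Staircase

section Droplet

/-- Energy, relative to a sea of `m`, of an `a × b` rectangle of ones with a unit protuberance
on one side: perimeter `2(a + b) + 2`, area `ab + 1`. -/
def dropletEnergy (h a b : ℝ) : ℝ := 2 * (a + b) + 2 - h * (a * b + 1)

variable {h : ℝ} {ℓ : ℕ}

theorem Gamma_eq_dropletEnergy (h : ℝ) :
    Gamma h = dropletEnergy h ((ellStar h : ℝ) - 1) (ellStar h) := by
  unfold Gamma dropletEnergy; ring

theorem mul_ellStar_sub_one_lt_two (h0 : 0 < h) : h * ((ellStar h : ℝ) - 1) < 2 := by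
  have := Nat.ceil_lt_add_one (div_pos two_pos h0).le
  rw [← lt_div_iff₀' h0, ellStar]
  linarith

theorem two_le_mul_ellStar (h0 : 0 < h) : 2 ≤ h * ellStar h := by
  rw [← div_le_iff₀' h0, ellStar]
  exact Nat.le_ceil _

/-- Both factors of the difference change sign at `a = ℓ - 1`. -/
theorem dropletEnergy_succ_le (h0 : 0 < h) (hlo : h * ((ℓ : ℝ) - 1) < 2) (hup : 2 ≤ h * ℓ)
    (a : ℕ) : dropletEnergy h a (a + 1) ≤ dropletEnergy h ((ℓ : ℝ) - 1) ℓ := by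
  have hdiff : dropletEnergy h ((ℓ : ℝ) - 1) ℓ - dropletEnergy h a (a + 1)
      = ((ℓ : ℝ) - 1 - a) * (4 - h * (a + ℓ)) := by
    unfold dropletEnergy; ring
  rcases lt_trichotomy (a + 1) ℓ with ha | ha | ha
  · have ha' : (a : ℝ) + 2 ≤ ℓ := by exact_mod_cast ha
    have hfac : 0 ≤ 4 - h * (a + ℓ) := by nlinarith
    nlinarith [mul_nonneg (by linarith : (0 : ℝ) ≤ ℓ - 1 - a) hfac]
  · have ha' : (a : ℝ) + 1 = ℓ := by exact_mod_cast ha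
    rw [← ha', add_sub_cancel_right]
  · have ha' : (ℓ : ℝ) ≤ a := by exact_mod_cast Nat.le_of_lt_succ ha
    have hfac : 4 - h * (a + ℓ) ≤ 0 := by nlinarith
    nlinarith [mul_nonneg_of_nonpos_of_nonpos (by linarith : (ℓ : ℝ) - 1 - a ≤ 0) hfac]

/-- Growing the square `a × a` into `a × (a + 1)` changes the energy by `2 - h a`. -/
theorem dropletEnergy_self_le (h0 : 0 < h) (hlo : h * ((ℓ : ℝ) - 1) < 2) (hup : 2 ≤ h * ℓ)
    (a : ℕ) : dropletEnergy h a a ≤ dropletEnergy h ((ℓ : ℝ) - 1) ℓ := by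
  rcases Nat.lt_or_ge a ℓ with ha | ha
  · have ha' : (a : ℝ) + 1 ≤ ℓ := by exact_mod_cast ha
    have := dropletEnergy_succ_le h0 hlo hup a
    unfold dropletEnergy at *
    nlinarith
  · obtain ⟨b, rfl⟩ : ∃ b, a = b + 1 := ⟨a - 1, by
      have : ℓ ≠ 0 := by rintro rfl; norm_num at hup
      omega⟩
    have ha' : (ℓ : ℝ) ≤ b + 1 := by exact_mod_cast ha
    have := dropletEnergy_succ_le h0 hlo hup b
    unfold dropletEnergy at *
    push_cast
    nlinarith

theorem dropletEnergy_le_Gamma (h0 : 0 < h) {a b : ℕ} (hab : a ≤ b) (hba : b ≤ a + 1) :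
    dropletEnergy h a b ≤ Gamma h := by
  have hlo := mul_ellStar_sub_one_lt_two h0
  have hup := two_le_mul_ellStar h0
  rw [Gamma_eq_dropletEnergy]
  obtain rfl | rfl : b = a ∨ b = a + 1 := by omega
  · exact dropletEnergy_self_le h0 hlo hup _
  · exact_mod_cast dropletEnergy_succ_le h0 hlo hup _

end Droplet

section Shapes

/-- For `s ≤ a`: the `a × a` square with `s` cells on column `a`; for `a < s ≤ 2a`: the
`a × (a + 1)` rectangle with one extra cell on each of its first `s - a` columns. -/
def quasiSquare (a s : ℕ) : ℕ → ℕ :=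
  if s ≤ a then stair a a (a + 1) s else stair (s - a) (a + 1) (a + 1) a

/-- `n` cells arranged in full columns of height `K` to the right of the `K × K` square. -/
def band (K n : ℕ) : ℕ → ℕ := stair (K + n / K) K (K + n / K + 1) (n % K)

theorem stair_zero (p u r : ℕ) : stair p u r 0 = stair p u p 0 := by
  funext j; unfold stair; split_ifs <;> omega

variable {K L : ℕ} [NeZero K] [NeZero L] {h : ℝ} {m : ℕ}

theorem energy_quasiSquare_le_of_le (hm : m ≠ 1) (h0 : 0 ≤ h) (h2 : h ≤ 2) (hKL : K ≤ L)
    {a s : ℕ} (haK : a < K) (hsa : s ≤ a) :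
    energy K L h (profileCfg K L m (quasiSquare a s)) ≤ -(2 * K * L) + dropletEnergy h a a := by
  rw [quasiSquare, if_pos hsa]
  unfold dropletEnergy
  rcases Nat.eq_zero_or_pos s with rfl | hs
  · rw [stair_zero]
    have := energy_profileCfg_stair_le (L := L) (p := a) h hm le_rfl (by omega) (Nat.zero_le a)
      haK.le
    rw [if_pos haK] at this
    push_cast at this
    nlinarith
  · have := energy_profileCfg_stair_le (L := L) h hm (Nat.le_succ a) (by omega) hsa haK.le
    rw [if_pos haK] at this
    have hs' : (1 : ℝ) ≤ s := by exact_mod_cast hs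
    push_cast at this
    nlinarith

theorem energy_quasiSquare_le_of_lt (hm : m ≠ 1) (h0 : 0 ≤ h) (hKL : K ≤ L) {a s : ℕ}
    (haK : a < K) (has : a < s) (hs : s ≤ 2 * a) :
    energy K L h (profileCfg K L m (quasiSquare a s))
      ≤ -(2 * K * L) + dropletEnergy h a (a + 1) := by
  rw [quasiSquare, if_neg (by omega)]
  unfold dropletEnergy
  have := energy_profileCfg_stair_le (L := L) h hm (by omega : s - a ≤ a + 1) (by omega)
    (Nat.le_succ a) haK
  have hsa : ((s - a : ℕ) : ℝ) = s - a := Nat.cast_sub has.le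
  have hs' : (a : ℝ) + 1 ≤ s := by exact_mod_cast has
  rw [hsa] at this
  split_ifs at this <;> push_cast at this <;> nlinarith

theorem energy_band_le (hm : m ≠ 1) (h0 : 0 ≤ h) (h2 : h ≤ 2) {n : ℕ}
    (hn : K * K + n ≤ K * L) :
    energy K L h (profileCfg K L m (band K n)) ≤ -(2 * K * L) + dropletEnergy h K K := by
  have hK : 0 < K := Nat.pos_of_ne_zero (NeZero.ne K)
  have hdiv := Nat.div_add_mod n K
  have hmod := Nat.mod_lt n hK
  have hcols : K * (K + n / K) + n % K ≤ K * L := by rw [mul_add]; omega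
  unfold band dropletEnergy
  have hK1 : (1 : ℝ) ≤ K := by exact_mod_cast hK
  have harea : (K : ℝ) * K ≤ (K + n / K : ℕ) * K := by
    exact_mod_cast Nat.mul_le_mul_right K (Nat.le_add_right K _)
  rcases Nat.eq_zero_or_pos (n % K) with hl | hl
  · rw [hl, stair_zero]
    have := energy_profileCfg_stair_le (L := L) (p := K + n / K) h hm le_rfl
      (Nat.le_of_mul_le_mul_left (by omega : K * (K + n / K) ≤ K * L) hK) (Nat.zero_le K) le_rfl
    rw [if_neg (lt_irrefl K)] at this
    push_cast at this harea ⊢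
    nlinarith
  · have := energy_profileCfg_stair_le (L := L) h hm (Nat.le_succ _)
      (Nat.lt_of_mul_lt_mul_left (by omega : K * (K + n / K) < K * L)) hmod.le le_rfl
    rw [if_neg (lt_irrefl K)] at this
    push_cast at this harea ⊢
    nlinarith

end Shapes

section Growth

def IsGrowthStep (K L : ℕ) (g g' : ℕ → ℕ) : Prop :=
  ∃ j < L, g j < K ∧ g' = Function.update g j (g j + 1)

variable {K L : ℕ}

theorem isGrowthStep_quasiSquare {a s : ℕ} (haK : a < K) (hKL : K ≤ L) (hs : s < 2 * a) :
    IsGrowthStep K L (quasiSquare a s) (quasiSquare a (s + 1)) := by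
  refine ⟨if s < a then a else s - a, by split_ifs <;> omega, ?_, ?_⟩
  · simp only [quasiSquare, stair, ite_apply]; split_ifs <;> omega
  · funext j; simp only [quasiSquare, stair, Function.update_apply, ite_apply]
    split_ifs <;> omega

theorem isGrowthStep_quasiSquare_succ {a : ℕ} (haK : a < K) (hKL : K ≤ L) :
    IsGrowthStep K L (quasiSquare a (2 * a)) (quasiSquare (a + 1) 0) := by
  refine ⟨a, by omega, ?_, ?_⟩
  · simp only [quasiSquare, stair, ite_apply]; split_ifs <;> omega
  · funext j; simp only [quasiSquare, stair, Function.update_apply, ite_apply]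
    split_ifs <;> omega

theorem isGrowthStep_band {n : ℕ} (hn : K * K + n < K * L) :
    IsGrowthStep K L (band K n) (band K (n + 1)) := by
  have hK : 0 < K := Nat.pos_of_ne_zero (by rintro rfl; simp at hn)
  have hdiv := Nat.div_add_mod n K
  have hmod := Nat.mod_lt n hK
  have hcol : K + n / K < L :=
    Nat.lt_of_mul_lt_mul_left (a := K) (by rw [mul_add]; omega)
  have hnext : band K (n + 1) = Function.update (band K n) (K + n / K) (n % K + 1) := by
    unfold band
    rcases Nat.lt_or_ge (n % K + 1) K with hl | hl
    · obtain ⟨hd, hm⟩ := (Nat.div_mod_unique hK).mpr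
        ⟨(by omega : n % K + 1 + K * (n / K) = n + 1), hl⟩
      rw [hd, hm]
      funext j; simp only [stair, Function.update_apply]; split_ifs <;> omega
    · obtain ⟨hd, hm⟩ := (Nat.div_mod_unique hK).mpr
        ⟨(by rw [mul_add]; omega : 0 + K * (n / K + 1) = n + 1), hK⟩
      rw [hd, hm]
      funext j; simp only [stair, Function.update_apply]; split_ifs <;> omega
  have hval : band K n (K + n / K) = n % K := by simp [band, stair]
  exact ⟨K + n / K, hcol, hval ▸ hmod, hval ▸ hnext⟩

def growthProfile (K t : ℕ) : ℕ → ℕ :=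
  if t < K * K then quasiSquare t.sqrt (t - t.sqrt * t.sqrt) else band K (t - K * K)

theorem growthProfile_mul_self_add {a s : ℕ} (hs : s ≤ 2 * a) (ht : a * a + s ≤ K * K) :
    growthProfile K (a * a + s) = quasiSquare a s := by
  have hsqrt : (a * a + s).sqrt = a := Nat.sqrt_add_eq a (by omega)
  unfold growthProfile
  split_ifs with hlt
  · rw [hsqrt, Nat.add_sub_cancel_left]
  · obtain rfl : a = K := by rw [← hsqrt, show a * a + s = K * K by omega, Nat.sqrt_eq]
    obtain rfl : s = 0 := by omega
    funext j; simp [band, quasiSquare]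

theorem exists_eq_mul_self_add {t : ℕ} (ht : t < K * K) :
    ∃ a s, t = a * a + s ∧ s ≤ 2 * a ∧ a < K := by
  have hlow := Nat.sqrt_le t
  have hhigh : t < (t.sqrt + 1) * (t.sqrt + 1) := Nat.lt_succ_sqrt t
  have hsq_succ : (t.sqrt + 1) * (t.sqrt + 1) = t.sqrt * t.sqrt + 2 * t.sqrt + 1 := by ring
  exact ⟨t.sqrt, t - t.sqrt * t.sqrt, by omega, by omega, Nat.sqrt_lt.mpr ht⟩

theorem isGrowthStep_growthProfile (hKL : K ≤ L) {t : ℕ} (ht : t < K * L) :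
    IsGrowthStep K L (growthProfile K t) (growthProfile K (t + 1)) := by
  rcases Nat.lt_or_ge t (K * K) with hsq | hband
  · obtain ⟨a, s, rfl, hs, haK⟩ := exists_eq_mul_self_add hsq
    rw [growthProfile_mul_self_add hs hsq.le]
    rcases hs.lt_or_eq with hs | rfl
    · rw [add_assoc, growthProfile_mul_self_add (by omega) (by omega)]
      exact isGrowthStep_quasiSquare haK hKL hs
    · rw [show a * a + 2 * a + 1 = (a + 1) * (a + 1) + 0 by ring,
        growthProfile_mul_self_add (by omega) (by nlinarith)]
      exact isGrowthStep_quasiSquare_succ haK hKL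
  · have hstep := isGrowthStep_band (K := K) (L := L) (n := t - K * K) (by omega)
    unfold growthProfile
    rwa [if_neg (by omega), if_neg (by omega), show t + 1 - K * K = t - K * K + 1 by omega]

theorem growthProfile_zero : growthProfile K 0 = fun _ => 0 := by
  rw [show 0 = 0 * 0 + 0 from rfl, growthProfile_mul_self_add le_rfl (Nat.zero_le _)]
  funext j; simp [quasiSquare, stair]

theorem growthProfile_mul (hK : 0 < K) (hKL : K ≤ L) {j : ℕ} (hj : j < L) :
    growthProfile K (K * L) j = K := by
  have hn : K * L - K * K = 0 + K * (L - K) := by rw [Nat.mul_sub]; omega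
  obtain ⟨hd, hm⟩ := (Nat.div_mod_unique hK).mpr ⟨hn.symm, hK⟩
  rw [growthProfile, if_neg (by nlinarith), band, hd, hm]
  simp only [stair]; split_ifs <;> omega

end Growth

section Paths

variable {q K L : ℕ}

theorem isPath_map_range (f : ℕ → Cfg K L) (T : ℕ)
    (hstep : ∀ t < T, Communicates K L (f t) (f (t + 1))) (hconf : ∀ t, IsConf q K L (f t)) :
    IsPath q K L (f 0) (f T) ((List.range (T + 1)).map f) := by
  refine ⟨by simp [List.range_succ_eq_map], by simp [List.range_succ], ?_, by simp [hconf]⟩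
  show List.IsChain _ _
  rw [List.isChain_map, List.isChain_range_succ]
  exact hstep

theorem Phi_le_of_isPath [NeZero K] [NeZero L] {h c : ℝ} {σ σ' : Cfg K L} {ω : List (Cfg K L)}
    (hω : IsPath q K L σ σ' ω) (hc : ∀ η ∈ ω, energy K L h η ≤ c) : Phi q K L h σ σ' ≤ c := by
  have hσ : σ ∈ ω := List.mem_of_mem_head? hω.1
  have hbdd : BddBelow (height K L h '' {ω | IsPath q K L σ σ' ω}) := by
    refine ⟨energy K L h σ, ?_⟩
    rintro _ ⟨ω', hω', rfl⟩
    exact le_csSup ((ω'.finite_toSet.image _).bddAbove)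
      ⟨σ, List.mem_of_mem_head? hω'.1, rfl⟩
  calc Phi q K L h σ σ' ≤ height K L h ω := csInf_le hbdd ⟨ω, hω, rfl⟩
    _ ≤ c := csSup_le ⟨_, σ, hσ, rfl⟩ (by rintro _ ⟨η, hη, rfl⟩; exact hc η hη)

variable {m : ℕ}

theorem communicates_profileCfg [NeZero K] [NeZero L] (hm : m ≠ 1) {g g' : ℕ → ℕ}
    (hg : IsGrowthStep K L g g') :
    Communicates K L (profileCfg K L m g) (profileCfg K L m g') := by
  obtain ⟨j, hjL, hjK, rfl⟩ := hg
  refine ⟨((g j : ℕ), (j : ℕ)), ?_, fun w hw => ?_⟩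
  · simp [profileCfg, ZMod.val_cast_of_lt hjK, ZMod.val_cast_of_lt hjL, hm]
  · by_cases hw2 : w.2.val = j
    · have hw1 : w.1.val ≠ g j := fun hw1 => hw <| Prod.ext
        (by rw [← hw1, ZMod.natCast_zmod_val]) (by rw [← hw2, ZMod.natCast_zmod_val])
      simp only [profileCfg, Function.update_apply, hw2, if_true]
      split_ifs <;> omega
    · simp [profileCfg, hw2]

theorem isConf_profileCfg (hm : 1 ≤ m) (hmq : m ≤ q) (g : ℕ → ℕ) :
    IsConf q K L (profileCfg K L m g) := fun v => by
  unfold profileCfg; split_ifs <;> omega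

end Paths

section GrowthPath

variable {K L : ℕ} [NeZero K] [NeZero L] {m : ℕ}

theorem energy_const_of_ne_one (h : ℝ) (hm : m ≠ 1) :
    energy K L h (const K L m) = -(2 * K * L) := by
  simp [energy, const, hm]
  ring

theorem energy_growthProfile_le {h : ℝ} (hm : m ≠ 1) (h0 : 0 < h) (h2 : h ≤ 2) (hKL : K ≤ L)
    {t : ℕ} (ht : t ≤ K * L) :
    energy K L h (profileCfg K L m (growthProfile K t)) ≤ -(2 * K * L) + Gamma h := by
  rcases Nat.lt_or_ge t (K * K) with hsq | hband
  · obtain ⟨a, s, rfl, hs, haK⟩ := exists_eq_mul_self_add hsq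
    rw [growthProfile_mul_self_add hs hsq.le]
    rcases Nat.lt_or_ge a s with has | hsa
    · have := dropletEnergy_le_Gamma h0 (Nat.le_succ a) le_rfl
      push_cast at this
      linarith [energy_quasiSquare_le_of_lt hm h0.le hKL haK has hs]
    · linarith [energy_quasiSquare_le_of_le hm h0.le h2 hKL haK hsa,
        dropletEnergy_le_Gamma h0 (le_refl a) (Nat.le_succ a)]
  · rw [growthProfile, if_neg (by omega)]
    linarith [energy_band_le (K := K) (L := L) (m := m) hm h0.le h2 (n := t - K * K) (by omega),
      dropletEnergy_le_Gamma h0 (le_refl K) (Nat.le_succ K)]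

def growthPath (K L m : ℕ) : List (Cfg K L) :=
  (List.range (K * L + 1)).map fun t => profileCfg K L m (growthProfile K t)

theorem energy_le_of_mem_growthPath {h : ℝ} (hm : m ≠ 1) (h0 : 0 < h) (h2 : h ≤ 2)
    (hKL : K ≤ L) {η : Cfg K L} (hη : η ∈ growthPath K L m) :
    energy K L h η ≤ -(2 * K * L) + Gamma h := by
  obtain ⟨t, ht, rfl⟩ := List.mem_map.mp hη
  exact energy_growthProfile_le hm h0 h2 hKL (Nat.lt_succ_iff.mp (List.mem_range.mp ht))

theorem isPath_growthPath {q : ℕ} (hm : 2 ≤ m) (hmq : m ≤ q) (hKL : K ≤ L) :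
    IsPath q K L (const K L m) (const K L 1) (growthPath K L m) := by
  have hK : 0 < K := Nat.pos_of_ne_zero (NeZero.ne K)
  have hpath := isPath_map_range (q := q) (fun t => profileCfg K L m (growthProfile K t)) (K * L)
    (fun t ht => communicates_profileCfg (by omega) (isGrowthStep_growthProfile hKL ht))
    (fun t => isConf_profileCfg (by omega) hmq _)
  have hstart : profileCfg K L m (growthProfile K 0) = const K L m := by
    funext v; simp [profileCfg, growthProfile_zero, const]
  have hend : profileCfg K L m (growthProfile K (K * L)) = const K L 1 := by
    funext v
    simp [profileCfg, growthProfile_mul hK hKL (ZMod.val_lt v.2), ZMod.val_lt v.1, const]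
  rwa [hstart, hend] at hpath

end GrowthPath

theorem comm_height_upper_bound_general (q K L : ℕ) [NeZero K] [NeZero L] (h : ℝ)
    (hh0 : 0 < h) (hh1 : h < 1)
    (hKL : K ≤ L) :
    ∀ m, 2 ≤ m → m ≤ q →
      Phi q K L h (const K L m) (const K L 1) - energy K L h (const K L m)
        ≤ Gamma h := by
  intro m hm2 hmq
  have hm : m ≠ 1 := by omega
  have hPhi := Phi_le_of_isPath (isPath_growthPath hm2 hmq hKL) fun η hη =>
    energy_le_of_mem_growthPath hm hh0 (by linarith) hKL hη
  rw [energy_const_of_ne_one h hm]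
  linarith

/-- upper bound for the communication height:
`Φ(𝐦,𝟏) − H(𝐦) ≤ 4ℓ* − h(ℓ*(ℓ*−1)+1)` for every `m ∈ {2,…,q}`. -/
theorem comm_height_upper_bound (q K L : ℕ) [NeZero K] [NeZero L] (h : ℝ)
    (hq : 2 < q) (hh0 : 0 < h) (hh1 : h < 1)
    (hhint : ¬ ∃ n : ℤ, (2 : ℝ) / h = (n : ℝ))
    (hK : 3 * ellStar h ≤ K) (hKL : K ≤ L) :
    ∀ m, 2 ≤ m → m ≤ q →
      Phi q K L h (const K L m) (const K L 1) - energy K L h (const K L m)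
        ≤ Gamma h :=
  comm_height_upper_bound_general q K L h hh0 hh1 hKL

end PottsPos
end

section
/- Lower bound for the communication height: for every m ∈ {2,…,q}, Φ(𝐦, 𝟏) − H(𝐦) ≥ 4ℓ* − h(ℓ*(ℓ*−1)+1). -/
/-!
Every path from `𝐦` to `𝟏` changes the number of `1`-spins by at most one per step, so it
visits a configuration `η` with exactly `ℓ*(ℓ*-1)+1` spins equal to `1`. Along each row of the
torus that contains both a `1` and a non-`1`, the spin changes at least twice, and similarly
for columns. Since `ℓ*(ℓ*-1)+1` vertices cannot be covered by `r` rows and `c` columns with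
`r + c < 2ℓ*`, and full rows or columns are too long to fit into a set of that size,
the partially occupied rows and columns number at least `2ℓ*`. Hence `η` has at least
`4ℓ*` disagreeing edges, and `H(η) - H(𝐦) ≥ 4ℓ* - h(ℓ*(ℓ*-1)+1)`.
-/

open Finset

namespace ZMod

variable {n : ℕ} [NeZero n]

theorem exists_and_not_add_one {P : ZMod n → Prop} {a b : ZMod n} (ha : P a) (hb : ¬ P b) :
    ∃ y, P y ∧ ¬ P (y + 1) := by
  by_contra! hclosed
  have hall : ∀ k : ℕ, P (a + k) := by
    intro k
    induction k with
    | zero => simpa using ha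
    | succ k ih => simpa [add_assoc] using hclosed _ ih
  exact hb (by simpa using hall (b - a).val)

theorem two_le_card_filter_ne_add_one {β : Type*} [DecidableEq β] {f : ZMod n → β} {c : β}
    (hc : ∃ y, f y = c) (hnc : ∃ y, f y ≠ c) :
    2 ≤ #{y | f y ≠ f (y + 1)} := by
  obtain ⟨y₀, hy₀⟩ := hc
  obtain ⟨y₁, hy₁⟩ := hnc
  obtain ⟨exit, hexit, hexit'⟩ := exists_and_not_add_one (P := (f · = c)) hy₀ hy₁
  obtain ⟨entry, hentry, hentry'⟩ :=
    exists_and_not_add_one (P := (f · ≠ c)) hy₁ (not_not_intro hy₀)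
  rw [not_not] at hentry'
  have hne : exit ≠ entry := by rintro rfl; exact hentry hexit
  calc 2 = #{exit, entry} := (card_pair hne).symm
    _ ≤ _ := card_le_card <| by simp [insert_subset_iff, hexit, hentry', hentry, Ne.symm hexit']

end ZMod

section Lines

variable {α γ β : Type*} [Fintype α] [Fintype γ] [DecidableEq β]

def partialRows (σ : α × γ → β) (c : β) : Finset α :=
  {x | (∃ y, σ (x, y) = c) ∧ ∃ y, σ (x, y) ≠ c}

theorem card_filter_swap (p : α × γ → Prop) [DecidablePred p] :
    #{w : γ × α | p w.swap} = #{v | p v} :=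
  card_equiv (Equiv.prodComm γ α) (by simp)

theorem card_filter_eq_sum_card_filter (p : α × γ → Prop) [DecidablePred p] :
    #{v | p v} = ∑ x, #{y | p (x, y)} := by
  simp only [card_filter, Fintype.sum_prod_type]

/-- With a full column every row meets `c`, so the rows that are not partial are full, and
they fit into `{v | σ v = c}`. -/
theorem card_mul_le_card_partialRows_mul_add (σ : α × γ → β) (c : β)
    (hcol : ∃ y, ∀ x, σ (x, y) = c) :
    Fintype.card α * Fintype.card γ ≤
      #(partialRows σ c) * Fintype.card γ + #{v | σ v = c} := by
  classical
  obtain ⟨y₀, hy₀⟩ := hcol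
  set full : Finset α := {x | ∀ y, σ (x, y) = c}
  have hrows : Fintype.card α ≤ #(partialRows σ c) + #full := by
    calc Fintype.card α = #(partialRows σ c ∪ full) := by
          rw [← card_univ]; congr 1; ext x
          simp only [partialRows, full, mem_univ, mem_union, mem_filter, true_and, true_iff]
          by_cases hx : ∀ y, σ (x, y) = c
          · exact Or.inr hx
          · push Not at hx; exact Or.inl ⟨⟨y₀, hy₀ x⟩, hx⟩
      _ ≤ _ := card_union_le _ _
  have hfull : #full * Fintype.card γ ≤ #{v | σ v = c} := by
    rw [← card_univ, ← card_product]
    exact card_le_card fun v hv => by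
      simp only [full, mem_product, mem_filter, mem_univ, true_and, and_true] at hv ⊢
      exact hv v.2
  nlinarith

theorem card_filter_eq_le_card_partialRows_mul (σ : α × γ → β) (c : β)
    (hrow : ∀ x, ∃ y, σ (x, y) ≠ c) (hcol : ∀ y, ∃ x, σ (x, y) ≠ c) :
    #{v | σ v = c} ≤ #(partialRows σ c) * #(partialRows (σ ∘ Prod.swap) c) := by
  rw [← card_product]
  refine card_le_card fun v hv => ?_
  simp only [mem_filter, mem_univ, true_and] at hv
  simp only [partialRows, mem_product, mem_filter, mem_univ, true_and, Function.comp_apply,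
    Prod.swap_prod_mk]
  exact ⟨⟨⟨v.2, hv⟩, hrow v.1⟩, ⟨v.1, hv⟩, hcol v.2⟩

theorem two_mul_le_add_of_mul_sub_one_lt {ℓ r s : ℕ} (h : ℓ * (ℓ - 1) < r * s) :
    2 * ℓ ≤ r + s := by
  by_contra! hlt
  obtain ⟨k, rfl⟩ : ∃ k, ℓ = k + 1 := ⟨ℓ - 1, by omega⟩
  simp only [Nat.add_sub_cancel] at h
  nlinarith [sq_nonneg ((r : ℤ) - s)]

theorem two_mul_le_card_partialRows_add (σ : α × γ → β) (c : β) {ℓ : ℕ}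
    (hlo : ℓ * (ℓ - 1) < #{v | σ v = c}) (hhi : #{v | σ v = c} ≤ ℓ * ℓ)
    (hα : 3 * ℓ ≤ Fintype.card α) (hγ : 3 * ℓ ≤ Fintype.card γ) :
    2 * ℓ ≤ #(partialRows σ c) + #(partialRows (σ ∘ Prod.swap) c) := by
  by_cases hcol : ∃ y, ∀ x, σ (x, y) = c
  · have := card_mul_le_card_partialRows_mul_add σ c hcol
    nlinarith
  by_cases hrow : ∃ x, ∀ y, σ (x, y) = c
  · have := card_mul_le_card_partialRows_mul_add (σ ∘ Prod.swap) c hrow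
    rw [← card_filter_swap] at hhi
    simp only [Function.comp_apply] at this
    nlinarith
  push Not at hcol hrow
  exact two_mul_le_add_of_mul_sub_one_lt
    (hlo.trans_le (card_filter_eq_le_card_partialRows_mul σ c hrow hcol))

theorem two_mul_card_partialRows_le {n : ℕ} [NeZero n] (σ : α × ZMod n → β) (c : β) :
    2 * #(partialRows σ c) ≤ #{v | σ v ≠ σ (v.1, v.2 + 1)} := by
  calc 2 * #(partialRows σ c) = ∑ _x ∈ partialRows σ c, 2 := by
        rw [sum_const, smul_eq_mul, mul_comm]
    _ ≤ ∑ x ∈ partialRows σ c, #{y | σ (x, y) ≠ σ (x, y + 1)} := sum_le_sum fun x hx => by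
        simp only [partialRows, mem_filter, mem_univ, true_and] at hx
        exact ZMod.two_le_card_filter_ne_add_one hx.1 hx.2
    _ ≤ ∑ x, #{y | σ (x, y) ≠ σ (x, y + 1)} := sum_le_sum_of_subset (subset_univ _)
    _ = #{v | σ v ≠ σ (v.1, v.2 + 1)} := by rw [card_filter_eq_sum_card_filter]

theorem two_mul_card_partialRows_swap_le {n : ℕ} [NeZero n] (σ : ZMod n × α → β) (c : β) :
    2 * #(partialRows (σ ∘ Prod.swap) c) ≤ #{v | σ v ≠ σ (v.1 + 1, v.2)} := by
  rw [← card_filter_swap]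
  simpa using two_mul_card_partialRows_le (σ ∘ Prod.swap) c

end Lines

theorem List.exists_mem_eq_of_chain_le_add_one {ι : Type*} (g : ι → ℕ) {t : ℕ} :
    ∀ {ω : List ι} {a b : ι}, ω.IsChain (fun x y => g y ≤ g x + 1) →
      ω.head? = some a → ω.getLast? = some b → g a ≤ t → t ≤ g b → ∃ η ∈ ω, g η = t
  | [], _, _, _, ha, _, _, _ => by simp at ha
  | [x], a, b, _, ha, hb, hga, hgb => by
    simp only [List.head?_cons, List.getLast?_singleton, Option.some.injEq] at ha hb
    subst ha hb
    exact ⟨x, by simp, le_antisymm hga hgb⟩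
  | x :: y :: ω, a, b, hchain, ha, hb, hga, hgb => by
    simp only [List.head?_cons, Option.some.injEq] at ha
    subst ha
    obtain ⟨hxy, hchain⟩ := List.isChain_cons_cons.1 hchain
    rcases hga.eq_or_lt with hx | hx
    · exact ⟨x, by simp, hx⟩
    obtain ⟨η, hη, hgη⟩ := exists_mem_eq_of_chain_le_add_one g hchain rfl
      (by simpa using hb) (by omega) hgb
    exact ⟨η, List.mem_cons_of_mem _ hη, hgη⟩

namespace PottsPos

variable {K L : ℕ} [NeZero K] [NeZero L]

theorem energy_eq_card (h : ℝ) (σ : Cfg K L) :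
    energy K L h σ = (#{v | σ v ≠ σ (v.1 + 1, v.2)} + #{v | σ v ≠ σ (v.1, v.2 + 1)} : ℝ)
      - h * #{v | σ v = 1} - 2 * (K * L) := by
  have hcard : ∀ p : Vtx K L → Prop, [DecidablePred p] →
      (#{v | p v} + #{v | ¬ p v} : ℝ) = K * L := fun p _ => by
    rw [← Nat.cast_add, card_filter_add_card_filter_not, card_univ]
    simp [ZMod.card]
  simp only [energy, sum_add_distrib, sum_boole]
  linarith [hcard (fun v => σ v = σ (v.1 + 1, v.2)), hcard (fun v => σ v = σ (v.1, v.2 + 1))]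

theorem energy_const {m : ℕ} (h : ℝ) (hm : m ≠ 1) :
    energy K L h (const K L m) = -(2 * (K * L)) := by
  simp [energy_eq_card, const, hm]

theorem card_filter_le_of_communicates {σ σ' : Cfg K L} (hσ : Communicates K L σ σ') (s : ℕ) :
    #{v | σ' v = s} ≤ #{v | σ v = s} + 1 := by
  obtain ⟨w, -, hw⟩ := hσ
  calc #{v | σ' v = s} ≤ #(insert w ({v | σ v = s} : Finset (Vtx K L))) :=
        card_le_card fun v hv => by
          by_cases hvw : v = w
          · simp [hvw]
          · simp_all
    _ ≤ #{v | σ v = s} + 1 := card_insert_le _ _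

theorem exists_mem_card_eq_of_isPath {q m t : ℕ} {ω : List (Cfg K L)} (hm : m ≠ 1)
    (hω : IsPath q K L (const K L m) (const K L 1) ω) (ht : t ≤ K * L) :
    ∃ η ∈ ω, #{v | η v = 1} = t := by
  obtain ⟨hhead, hlast, hchain, -⟩ := hω
  refine List.exists_mem_eq_of_chain_le_add_one (fun σ : Cfg K L => #{v | σ v = 1})
    (hchain.imp fun σ σ' hσ => card_filter_le_of_communicates hσ 1) hhead hlast ?_ ?_
  · simp [const, hm]
  · simpa [const, ZMod.card] using ht

theorem four_mul_le_card_ne_add_card_ne (η : Cfg K L) (s : ℕ) {ℓ : ℕ}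
    (hlo : ℓ * (ℓ - 1) < #{v | η v = s}) (hhi : #{v | η v = s} ≤ ℓ * ℓ)
    (hK : 3 * ℓ ≤ K) (hL : 3 * ℓ ≤ L) :
    4 * ℓ ≤ #{v | η v ≠ η (v.1 + 1, v.2)} + #{v | η v ≠ η (v.1, v.2 + 1)} := by
  have hrows := two_mul_card_partialRows_le η s
  have hcols := two_mul_card_partialRows_swap_le η s
  have := two_mul_le_card_partialRows_add η s hlo hhi (by simpa [ZMod.card] using hK)
    (by simpa [ZMod.card] using hL)
  refine le_trans ?_ (add_le_add hcols hrows)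
  omega

theorem Gamma_sub_le_energy (h : ℝ) {η : Cfg K L} (hℓ : 1 ≤ ellStar h)
    (hK : 3 * ellStar h ≤ K) (hL : 3 * ellStar h ≤ L)
    (hη : #{v | η v = 1} = ellStar h * (ellStar h - 1) + 1) :
    Gamma h - 2 * (K * L) ≤ energy K L h η := by
  have hsq : ellStar h * (ellStar h - 1) + 1 ≤ ellStar h * ellStar h := by
    rw [Nat.mul_sub_one]
    have := Nat.le_mul_self (ellStar h)
    omega
  have hiso := four_mul_le_card_ne_add_card_ne η 1 (by omega) (hη ▸ hsq) hK hL
  rw [energy_eq_card, hη, Gamma]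
  push_cast [Nat.cast_sub hℓ]
  have hiso' : (4 * ellStar h : ℝ) ≤
      #{v | η v ≠ η (v.1 + 1, v.2)} + #{v | η v ≠ η (v.1, v.2 + 1)} := by
    exact_mod_cast hiso
  exact sub_le_sub_right (sub_le_sub_right hiso' _) _

theorem Gamma_le_four_mul {h : ℝ} (hh : 0 ≤ h) (hℓ : 1 ≤ ellStar h) :
    Gamma h ≤ 4 * ellStar h := by
  have : (1 : ℝ) ≤ ellStar h := by exact_mod_cast hℓ
  have : 0 ≤ h * ((ellStar h : ℝ) * (ellStar h - 1) + 1) := by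
    have : (0 : ℝ) ≤ ellStar h - 1 := by linarith
    positivity
  rw [Gamma]
  linarith

theorem le_Phi_of_forall_isPath {q : ℕ} {h c : ℝ} {σ σ' : Cfg K L} (hc : c ≤ 0)
    (hpath : ∀ ω, IsPath q K L σ σ' ω → ∃ η ∈ ω, c ≤ energy K L h η) :
    c ≤ Phi q K L h σ σ' := by
  rcases (height K L h '' {ω | IsPath q K L σ σ' ω}).eq_empty_or_nonempty with hempty | hne
  · -- without paths, `Phi` is the junk value `sInf ∅ = 0`
    rw [Phi, hempty, Real.sInf_empty]
    exact hc
  refine le_csInf hne ?_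
  rintro _ ⟨ω, hω, rfl⟩
  obtain ⟨η, hηω, hη⟩ := hpath ω hω
  exact hη.trans (le_csSup (ω.finite_toSet.image _).bddAbove ⟨η, hηω, rfl⟩)

theorem comm_height_lower_bound_general (q K L : ℕ) [NeZero K] [NeZero L] (h : ℝ)
    (hh0 : 0 < h)
    (hK : 3 * ellStar h ≤ K) (hKL : K ≤ L) :
    ∀ m, 2 ≤ m → m ≤ q →
      Gamma h ≤
        Phi q K L h (const K L m) (const K L 1) - energy K L h (const K L m) := by
  intro m hm _
  have hℓ : 1 ≤ ellStar h := Nat.one_le_iff_ne_zero.2 (Nat.ceil_pos.2 (by positivity)).ne'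
  have hsq : ellStar h * (ellStar h - 1) + 1 ≤ K * L := by
    have := Nat.mul_le_mul hK (hK.trans hKL)
    nlinarith [Nat.sub_le (ellStar h) 1]
  rw [energy_const h (by omega : m ≠ 1), le_sub_iff_add_le, ← sub_eq_add_neg]
  refine le_Phi_of_forall_isPath ?_ fun ω hω => ?_
  · have : (4 * ellStar h : ℝ) ≤ 2 * (K * L) := by
      exact_mod_cast (show 4 * ellStar h ≤ 2 * (K * L) by nlinarith)
    linarith [Gamma_le_four_mul hh0.le hℓ]
  obtain ⟨η, hηω, hη⟩ := exists_mem_card_eq_of_isPath (by omega) hω hsq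
  exact ⟨η, hηω, Gamma_sub_le_energy h hℓ hK (hK.trans hKL) hη⟩

/-- lower bound for the communication height:
`Φ(𝐦,𝟏) − H(𝐦) ≥ 4ℓ* − h(ℓ*(ℓ*−1)+1)` for every `m ∈ {2,…,q}`. -/
theorem comm_height_lower_bound (q K L : ℕ) [NeZero K] [NeZero L] (h : ℝ)
    (hq : 2 < q) (hh0 : 0 < h) (hh1 : h < 1)
    (hhint : ¬ ∃ n : ℤ, (2 : ℝ) / h = (n : ℝ))
    (hK : 3 * ellStar h ≤ K) (hKL : K ≤ L) :
    ∀ m, 2 ≤ m → m ≤ q →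
      Gamma h ≤
        Phi q K L h (const K L m) (const K L 1) - energy K L h (const K L m) :=
  comm_height_lower_bound_general q K L h hh0 hK hKL

end PottsPos
end

section
/- For every m ∈ {2,…,q} and every configuration σ ∈ R̄_{ℓ*−1,ℓ*}(m,1) (all spins m except a quasi-square (ℓ*−1)×ℓ* of spins 1), there exists a path γ from σ to the constant configuration 𝐦 whose maximum energy satisfies max_{ξ∈γ} H(ξ) < 4ℓ* − h(ℓ*(ℓ*−1)+1) + H(𝐦). -/
/-!
Metastability for the q-state Potts model with positive external magnetic field
on the K × L torus, under Glauber (single-spin-flip) dynamics.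
-/

namespace PottsPos

/-!
Erase the spins `1` of the quasi-square one at a time, column by column along its side of
length `a = ℓ* − 1`. While `t` spins `1` are left they span `min t a` rows and `⌈t / a⌉`
columns, and the energy exceeds `H(𝐦)` by twice the sum of these minus `h t`. As
`h (ℓ* − 1) < 2`, erasing a whole column lowers the energy, so the highest configuration on the
path is an `(ℓ* − 1) × (ℓ* − 1)` square with one protuberance, which lies `2 − h (ℓ* − 1)` below
`Γ + H(𝐦)`. The other orientation of the rectangle is reduced to this one by transposing the
torus.
-/

lemma natCast_zmod_inj {n i j : ℕ} (hi : i < n) (hj : j < n) :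
    (i : ZMod n) = j ↔ i = j := by
  rw [ZMod.natCast_eq_natCast_iff', Nat.mod_eq_of_lt hi, Nat.mod_eq_of_lt hj]

lemma natCast_pred_zmod (n : ℕ) [NeZero n] : ((n - 1 : ℕ) : ZMod n) = -1 := by
  rw [Nat.cast_pred (NeZero.pos n), ZMod.natCast_self, zero_sub]

section Enumeration

variable {a b i j : ℕ}

lemma mul_add_lt_mul_iff (hi : i < a) : a * j + i < a * b ↔ j < b := by
  constructor
  · intro hlt
    by_contra! hbj
    nlinarith [Nat.mul_le_mul_left a hbj]
  · intro hjb
    nlinarith [Nat.mul_le_mul_left a (Nat.succ_le_of_lt hjb)]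

lemma mul_add_inj {i' j' : ℕ} (hi : i < a) (hi' : i' < a)
    (heq : a * j + i = a * j' + i') : j = j' ∧ i = i' := by
  have hpos : 0 < a := by omega
  obtain ⟨hdiv, hmod⟩ := (Nat.div_mod_unique hpos).2 ⟨add_comm _ _, hi⟩
  obtain ⟨hdiv', hmod'⟩ := (Nat.div_mod_unique hpos).2 ⟨add_comm _ _, hi'⟩
  rw [heq] at hdiv hmod
  exact ⟨hdiv.symm.trans hdiv', hmod.symm.trans hmod'⟩

lemma exists_mul_add_of_lt {t : ℕ} (ht : t < a * b) : ∃ i j, i < a ∧ j < b ∧ t = a * j + i := by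
  have ha : 0 < a := Nat.pos_of_mul_pos_right (b := b) (by omega)
  refine ⟨t % a, t / a, Nat.mod_lt t ha, ?_, (Nat.div_add_mod t a).symm⟩
  exact (mul_add_lt_mul_iff (Nat.mod_lt t ha)).1 (by rwa [Nat.div_add_mod])

lemma mul_add_ceilDiv (j : ℕ) (hi : i < a) :
    (a * j + i) ⌈/⌉ a = j + if i = 0 then 0 else 1 := by
  have ha : 0 < a := by omega
  rw [Nat.ceilDiv_eq_add_pred_div]
  split_ifs with hi0
  · rw [hi0, add_zero, Nat.add_sub_assoc ha, Nat.mul_add_div ha, Nat.div_eq_of_lt (by omega),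
      add_zero]
  · rw [show a * j + i + a - 1 = a * j + (i - 1 + a) by omega, Nat.mul_add_div ha,
      Nat.add_div_right _ ha, Nat.div_eq_of_lt (by omega)]

lemma min_mul_add (j : ℕ) (hi : i ≤ a) :
    min (a * j + i) a = if j = 0 then i else a := by
  split_ifs with hj0
  · simp [hj0, hi]
  · have : a ≤ a * j := Nat.le_mul_of_pos_right a (Nat.pos_of_ne_zero hj0)
    omega

end Enumeration

section Update

variable {G α : Type*} [Fintype G] [DecidableEq G] [DecidableEq α]

lemma sum_agree_update [AddGroup G] (σ : G → α) {e : G} (he : e ≠ 0) (v : G) (s : α) :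
    ∑ w, (if Function.update σ v s w = Function.update σ v s (w + e) then (1 : ℝ) else 0)
      = ∑ w, (if σ w = σ (w + e) then (1 : ℝ) else 0)
        + ((if s = σ (v + e) then 1 else 0) - (if σ v = σ (v + e) then 1 else 0))
        + ((if s = σ (v - e) then 1 else 0) - (if σ v = σ (v - e) then 1 else 0)) := by
  have hfwd : v + e ≠ v := by simpa using he
  have hbwd : v - e ≠ v := by simpa [sub_eq_self] using he
  rw [add_assoc, ← sub_eq_iff_eq_add', ← Finset.sum_sub_distrib,
    Fintype.sum_eq_add v (v - e) hbwd.symm]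
  · simp [Function.update_of_ne hfwd, Function.update_of_ne hbwd, eq_comm (b := s),
      eq_comm (b := σ v)]
  · rintro w ⟨hwv, hwe⟩
    have : w + e ≠ v := fun h => hwe (eq_sub_of_add_eq h)
    simp [Function.update_of_ne hwv, Function.update_of_ne this]

lemma sum_eq_spin_update (σ : G → α) (v : G) (s c : α) :
    ∑ w, (if Function.update σ v s w = c then (1 : ℝ) else 0)
      = ∑ w, (if σ w = c then (1 : ℝ) else 0)
        + ((if s = c then 1 else 0) - (if σ v = c then 1 else 0)) := by
  rw [← sub_eq_iff_eq_add', ← Finset.sum_sub_distrib, Fintype.sum_eq_single v]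
  · simp
  · intro w hw
    simp [Function.update_of_ne hw]

end Update

section Energy

variable {K L : ℕ} [NeZero K] [NeZero L] {h : ℝ}

lemma energy_eq_sum_agree (σ : Cfg K L) :
    energy K L h σ =
      -(∑ v, (if σ v = σ (v + (1, 0)) then (1 : ℝ) else 0)
        + ∑ v, (if σ v = σ (v + (0, 1)) then (1 : ℝ) else 0))
      - h * ∑ v, (if σ v = 1 then (1 : ℝ) else 0) := by
  simp only [energy, Finset.sum_add_distrib, Prod.add_def, add_zero]

theorem energy_update (hK : 2 ≤ K) (hL : 2 ≤ L) (σ : Cfg K L) (v : Vtx K L) (s : ℕ) :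
    energy K L h (Function.update σ v s) = energy K L h σ
      - ([(v.1 + 1, v.2), (v.1 - 1, v.2), (v.1, v.2 + 1), (v.1, v.2 - 1)].map
          fun w => (if s = σ w then (1 : ℝ) else 0) - (if σ v = σ w then 1 else 0)).sum
      - h * ((if s = 1 then 1 else 0) - (if σ v = 1 then 1 else 0)) := by
  have : Fact (1 < K) := ⟨hK⟩
  have : Fact (1 < L) := ⟨hL⟩
  have h10 : ((1, 0) : Vtx K L) ≠ 0 := by simp [Prod.ext_iff]
  have h01 : ((0, 1) : Vtx K L) ≠ 0 := by simp [Prod.ext_iff]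
  rw [energy_eq_sum_agree, energy_eq_sum_agree, sum_agree_update σ h10,
    sum_agree_update σ h01, sum_eq_spin_update]
  simp only [Prod.add_def, Prod.sub_def, add_zero, sub_zero, List.map_cons, List.map_nil,
    List.sum_cons, List.sum_nil]
  ring

end Energy

section ColumnFill

variable {K L : ℕ}

open Classical in
/-- The rectangle of height `a` based at `(x, y)` is enumerated column by column, cell
`a * j + i` being `(x + i, y + j)`; the first `t` cells carry spin `1`, all others spin `m`. -/
noncomputable def columnFill (a m : ℕ) (x : ZMod K) (y : ZMod L) (t : ℕ) : Cfg K L :=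
  fun v => if ∃ i j : ℕ, i < a ∧ a * j + i < t ∧ v = (x + i, y + j) then 1 else m

variable {a b m : ℕ} {x : ZMod K} {y : ZMod L}

lemma columnFill_zero : columnFill a m x y 0 = const K L m := by
  funext v
  simp [columnFill, const]

lemma columnFill_apply_one_or (t : ℕ) (v : Vtx K L) :
    columnFill a m x y t v = 1 ∨ columnFill a m x y t v = m := by
  unfold columnFill
  split_ifs <;> simp

lemma eq_columnFill_of_rect {σ : Cfg K L} (hσ1 : ∀ v ∈ rect K L x y a b, σ v = 1)
    (hσm : ∀ v ∉ rect K L x y a b, σ v = m) : σ = columnFill a m x y (a * b) := by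
  funext v
  by_cases hv : v ∈ rect K L x y a b
  · obtain ⟨i, j, hi, hj, rfl⟩ := hv
    rw [hσ1 _ ⟨i, j, hi, hj, rfl⟩, columnFill, if_pos]
    exact ⟨i, j, hi, (mul_add_lt_mul_iff hi).2 hj, rfl⟩
  · rw [hσm v hv, columnFill, if_neg]
    rintro ⟨i, j, hi, hij, rfl⟩
    exact hv ⟨i, j, hi, (mul_add_lt_mul_iff hi).1 hij, rfl⟩

lemma columnFill_succ {i j : ℕ} (hi : i < a) :
    columnFill a m x y (a * j + i + 1)
      = Function.update (columnFill a m x y (a * j + i)) (x + i, y + j) 1 := by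
  funext v
  by_cases hv : v = (x + i, y + j)
  · subst hv
    rw [Function.update_self, columnFill, if_pos ⟨i, j, hi, by omega, rfl⟩]
  · rw [Function.update_of_ne hv]
    unfold columnFill
    congr 1
    refine propext ⟨fun ⟨i', j', hi', hlt, hv'⟩ => ⟨i', j', hi', ?_, hv'⟩,
      fun ⟨i', j', hi', hlt, hv'⟩ => ⟨i', j', hi', by omega, hv'⟩⟩
    refine lt_of_le_of_ne (Nat.lt_succ_iff.1 hlt) fun heq => hv ?_
    obtain ⟨rfl, rfl⟩ := mul_add_inj hi' hi heq
    exact hv'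

lemma columnFill_natCast {t : ℕ} (haK : a ≤ K) (htL : t ≤ a * L) {i j : ℕ} (hi : i < K)
    (hj : j < L) :
    columnFill a m x y t (x + i, y + j) = if i < a ∧ a * j + i < t then 1 else m := by
  unfold columnFill
  congr 1
  refine propext ⟨fun ⟨i', j', hi', hlt, hv⟩ => ?_, fun ⟨hi', hlt⟩ => ⟨i, j, hi', hlt, rfl⟩⟩
  obtain ⟨hx, hy⟩ := Prod.mk.inj hv
  have hj' : j' < L := Nat.lt_of_mul_lt_mul_left (a := a) (by omega)
  rw [add_right_inj, natCast_zmod_inj hi (hi'.trans_le haK)] at hx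
  rw [add_right_inj, natCast_zmod_inj hj hj'] at hy
  subst hx hy
  exact ⟨hi', hlt⟩

lemma columnFill_cell (haK : a < K) (hbL : b < L) {i j : ℕ} (hi : i < a) (hj : j < b) :
    columnFill a m x y (a * j + i) (x + i, y + j) = m := by
  rw [columnFill_natCast haK.le (by nlinarith [(mul_add_lt_mul_iff (b := b) hi).2 hj])
    (by omega) (by omega), if_neg (by omega)]

theorem energy_columnFill_succ {h : ℝ} [NeZero K] [NeZero L] (haK : a < K) (hbL : b < L)
    (hm : m ≠ 1) {i j : ℕ} (hi : i < a) (hj : j < b) :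
    energy K L h (columnFill a m x y (a * j + i + 1))
      = energy K L h (columnFill a m x y (a * j + i)) + 4 - h
        - 2 * ((if i = 0 then 0 else 1) + (if j = 0 then 0 else 1)) := by
  rw [columnFill_succ hi, energy_update (by omega) (by omega)]
  dsimp only
  set σ := columnFill a m x y (a * j + i)
  have hval : ∀ {i' j' : ℕ}, i' < K → j' < L →
      σ (x + i', y + j') = if i' < a ∧ a * j' + i' < a * j + i then 1 else m :=
    columnFill_natCast haK.le (by nlinarith [(mul_add_lt_mul_iff (b := b) hi).2 hj])
  have hcell : σ (x + i, y + j) = m := columnFill_cell haK hbL hi hj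
  have hup : σ (x + i + 1, y + j) = m := by
    rw [add_assoc, ← Nat.cast_succ, hval (by omega) (by omega), if_neg (by omega)]
  have hright : σ (x + i, y + j + 1) = m := by
    rw [add_assoc y, ← Nat.cast_succ, hval (by omega) (by omega),
      if_neg (by rw [Nat.mul_succ]; omega)]
  have hdown : σ (x + i - 1, y + j) = if i = 0 then m else 1 := by
    rcases Nat.eq_zero_or_pos i with rfl | hi0
    · rw [Nat.cast_zero, add_zero, sub_eq_add_neg, ← natCast_pred_zmod K,
        hval (by omega) (by omega), if_neg (by omega), if_pos rfl]
    · rw [add_sub_assoc, ← Nat.cast_pred hi0, hval (by omega) (by omega), if_pos (by omega),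
        if_neg (by omega)]
  have hleft : σ (x + i, y + j - 1) = if j = 0 then m else 1 := by
    rcases Nat.eq_zero_or_pos j with rfl | hj0
    · rw [Nat.cast_zero, add_zero, sub_eq_add_neg, ← natCast_pred_zmod L,
        hval (by omega) (by omega), if_neg (by omega), if_pos rfl]
    · have : a * (j - 1) < a * j := Nat.mul_lt_mul_of_pos_left (by omega) (by omega)
      rw [add_sub_assoc, ← Nat.cast_pred hj0, hval (by omega) (by omega), if_pos (by omega),
        if_neg (by omega)]
  simp only [List.map_cons, List.map_nil, List.sum_cons, List.sum_nil, hcell, hup, hright,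
    hdown, hleft, if_neg hm.symm, if_neg hm, if_true]
  by_cases hi0 : i = 0 <;> by_cases hj0 : j = 0 <;> simp [hi0, hj0, hm, hm.symm] <;> ring

end ColumnFill

def columnPerimeter (a t : ℕ) : ℕ := 2 * min t a + 2 * (t ⌈/⌉ a)

lemma columnPerimeter_succ {a i : ℕ} (j : ℕ) (hi : i < a) :
    columnPerimeter a (a * j + i + 1) + 2 * ((if i = 0 then 0 else 1) + (if j = 0 then 0 else 1))
      = columnPerimeter a (a * j + i) + 4 := by
  have hceil : (a * j + i + 1) ⌈/⌉ a = j + 1 := by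
    rw [Nat.ceilDiv_eq_add_pred_div, show a * j + i + 1 + a - 1 = a * j + (i + a) by omega,
      Nat.mul_add_div (by omega), Nat.add_div_right _ (by omega), Nat.div_eq_of_lt hi]
  unfold columnPerimeter
  rw [hceil, mul_add_ceilDiv j hi, add_assoc (a * j), min_mul_add j hi, min_mul_add j hi.le]
  split_ifs <;> omega

section ColumnFillEnergy

variable {K L : ℕ} [NeZero K] [NeZero L] {a b m : ℕ} {x : ZMod K} {y : ZMod L} {h : ℝ}

theorem energy_columnFill (haK : a < K) (hbL : b < L) (hm : m ≠ 1) {t : ℕ} (ht : t ≤ a * b) :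
    energy K L h (columnFill a m x y t)
      = energy K L h (const K L m) + columnPerimeter a t - h * t := by
  induction t with
  | zero => simp [columnFill_zero, columnPerimeter]
  | succ t ih =>
    obtain ⟨i, j, hi, hj, rfl⟩ := exists_mul_add_of_lt (Nat.lt_of_succ_le ht)
    have hper := congrArg (Nat.cast : ℕ → ℝ) (columnPerimeter_succ j hi)
    rw [energy_columnFill_succ haK hbL hm hi hj, ih (by omega)]
    push_cast at hper ⊢
    linarith

lemma columnPerimeter_sub_le (ha : 0 < a) (hh : 0 < h) (hha : h * a < 2)
    {t : ℕ} (ht : t ≤ a * b) :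
    (columnPerimeter a t : ℝ) - h * t ≤ 2 * a + 2 * b - h * (a * (b - 1) + 1) := by
  set c := t ⌈/⌉ a with hc
  have hcb : c ≤ b := (ceilDiv_le_iff_le_mul ha).2 ht
  have hct : a * c + 1 ≤ t + a := by
    have := Nat.mul_div_le (t + a - 1) a
    rw [hc, Nat.ceilDiv_eq_add_pred_div]
    omega
  have hper : (columnPerimeter a t : ℝ) ≤ 2 * a + 2 * c := by
    rw [columnPerimeter, ← hc]
    push_cast
    linarith [min_le_right (t : ℝ) a]
  have hcb' : (c : ℝ) ≤ b := by exact_mod_cast hcb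
  have hct' : (a : ℝ) * c + 1 ≤ t + a := by exact_mod_cast hct
  nlinarith [mul_nonneg (sub_nonneg.2 hcb') (sub_nonneg.2 hha.le)]

end ColumnFillEnergy

section Paths

variable {q K L : ℕ}

lemma Communicates.symm {σ τ : Cfg K L} (hστ : Communicates K L σ τ) :
    Communicates K L τ σ :=
  let ⟨v, hv, heq⟩ := hστ
  ⟨v, Ne.symm hv, fun w hw => (heq w hw).symm⟩

lemma communicates_update {σ : Cfg K L} {v : Vtx K L} {s : ℕ} (hs : σ v ≠ s) :
    Communicates K L σ (Function.update σ v s) :=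
  ⟨v, by simpa using hs, fun w hw => (Function.update_of_ne hw s σ).symm⟩

lemma isPath_reverse_map_range (f : ℕ → Cfg K L) (n : ℕ)
    (hstep : ∀ t < n, Communicates K L (f t) (f (t + 1)))
    (hconf : ∀ t ≤ n, IsConf q K L (f t)) :
    IsPath q K L (f n) (f 0) ((List.range (n + 1)).map f).reverse := by
  refine ⟨?_, ?_, ?_, ?_⟩
  · rw [List.head?_reverse, List.getLast?_map, List.range_succ, List.getLast?_concat,
      Option.map_some]
  · rw [List.getLast?_reverse, List.head?_map, List.range_succ_eq_map, List.head?_cons,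
      Option.map_some]
  · rw [List.Chain', List.isChain_reverse, List.isChain_map, List.isChain_range_succ]
    exact fun t ht => (hstep t ht).symm
  · simp only [List.mem_reverse, List.mem_map, List.mem_range]
    rintro _ ⟨t, ht, rfl⟩
    exact hconf t (by omega)

lemma height_le [NeZero K] [NeZero L] {h B : ℝ} {ω : List (Cfg K L)} (hω : ω ≠ [])
    (hB : ∀ η ∈ ω, energy K L h η ≤ B) : height K L h ω ≤ B := by
  obtain ⟨η, hη⟩ := List.exists_mem_of_ne_nil ω hω
  exact csSup_le ⟨_, η, hη, rfl⟩ (by rintro _ ⟨η, hη, rfl⟩; exact hB η hη)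

end Paths

theorem exists_path_of_rect {q K L a b m : ℕ} [NeZero K] [NeZero L] {x : ZMod K} {y : ZMod L}
    {h : ℝ} (hm : 1 < m) (hmq : m ≤ q) (ha : 0 < a) (haK : a < K) (hbL : b < L) (hh : 0 < h)
    (hha : h * a < 2) {σ : Cfg K L} (hσ1 : ∀ v ∈ rect K L x y a b, σ v = 1)
    (hσm : ∀ v ∉ rect K L x y a b, σ v = m) :
    ∃ ω, IsPath q K L σ (const K L m) ω ∧
      height K L h ω ≤ energy K L h (const K L m) + 2 * a + 2 * b - h * (a * (b - 1) + 1) := by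
  refine ⟨((List.range (a * b + 1)).map (columnFill a m x y)).reverse, ?_, ?_⟩
  · rw [eq_columnFill_of_rect hσ1 hσm, ← columnFill_zero (a := a) (x := x) (y := y)]
    refine isPath_reverse_map_range _ _ (fun t ht => ?_) (fun t _ v => ?_)
    · obtain ⟨i, j, hi, hj, rfl⟩ := exists_mul_add_of_lt ht
      rw [columnFill_succ hi]
      exact communicates_update (by rw [columnFill_cell haK hbL hi hj]; omega)
    · rcases columnFill_apply_one_or (a := a) (m := m) (x := x) (y := y) t v with hv | hv <;>
        rw [hv] <;> omega
  · refine height_le (by simp) fun η hη => ?_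
    simp only [List.mem_reverse, List.mem_map, List.mem_range] at hη
    obtain ⟨t, ht, rfl⟩ := hη
    rw [energy_columnFill haK hbL hm.ne' (by omega)]
    linarith [columnPerimeter_sub_le ha hh hha (Nat.le_of_lt_succ ht)]

section Transpose

variable {q K L : ℕ}

def transpose (σ : Cfg K L) : Cfg L K := fun v => σ v.swap

lemma swap_mem_rect {x : ZMod K} {y : ZMod L} {a b : ℕ} {v : Vtx L K} :
    v.swap ∈ rect K L x y b a ↔ v ∈ rect L K y x a b := by
  constructor
  · rintro ⟨i, j, hi, hj, he⟩
    exact ⟨j, i, hj, hi, by rw [← Prod.swap_swap v, he]; rfl⟩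
  · rintro ⟨i, j, hi, hj, rfl⟩
    exact ⟨j, i, hj, hi, rfl⟩

lemma energy_transpose [NeZero K] [NeZero L] {h : ℝ} (σ : Cfg K L) :
    energy L K h (transpose σ) = energy K L h σ := by
  unfold energy transpose
  congr 2
  · exact Fintype.sum_equiv (Equiv.prodComm _ _) _ _ fun v => add_comm _ _
  · exact Fintype.sum_equiv (Equiv.prodComm _ _) _ _ fun v => rfl

lemma Communicates.transpose {σ τ : Cfg K L} (hστ : Communicates K L σ τ) :
    Communicates L K (transpose σ) (transpose τ) :=
  let ⟨v, hv, heq⟩ := hστ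
  ⟨v.swap, hv, fun w hw => heq w.swap fun h => hw (by rw [← h, Prod.swap_swap])⟩

lemma IsPath.map_transpose {σ τ : Cfg K L} {ω : List (Cfg K L)} (hω : IsPath q K L σ τ ω) :
    IsPath q L K (transpose σ) (transpose τ) (ω.map transpose) := by
  obtain ⟨hhead, hlast, hchain, hconf⟩ := hω
  refine ⟨by rw [List.head?_map, hhead, Option.map_some], by rw [List.getLast?_map, hlast,
    Option.map_some], ?_, ?_⟩
  · rw [List.Chain', List.isChain_map]
    exact hchain.imp fun _ _ => Communicates.transpose
  · simp only [List.mem_map]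
    rintro _ ⟨η, hη, rfl⟩ v
    exact hconf η hη v.swap

lemma height_map_transpose [NeZero K] [NeZero L] {h : ℝ} (ω : List (Cfg K L)) :
    height L K h (ω.map transpose) = height K L h ω := by
  unfold height
  congr 1
  ext e
  simp [energy_transpose]

end Transpose

theorem exists_path_of_rbar {q K L a b m : ℕ} [NeZero K] [NeZero L] {h : ℝ} (hm : 1 < m)
    (hmq : m ≤ q) (ha : 0 < a) (haK : a < K) (hbK : b < K) (hKL : K ≤ L) (hh : 0 < h)
    (hha : h * a < 2) {σ : Cfg K L} (hσ : σ ∈ Rbar K L a b m 1) :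
    ∃ ω, IsPath q K L σ (const K L m) ω ∧
      height K L h ω ≤ energy K L h (const K L m) + 2 * a + 2 * b - h * (a * (b - 1) + 1) := by
  obtain ⟨A, ⟨x, y, rfl | rfl⟩, hA1, hAm⟩ := hσ
  · exact exists_path_of_rect hm hmq ha haK (by omega) hh hha hA1 hAm
  · obtain ⟨ω, hω, hH⟩ := exists_path_of_rect (σ := transpose σ) hm hmq ha (by omega) hbK hh hha
      (fun v hv => hA1 _ (swap_mem_rect.2 hv)) (fun v hv => hAm _ (mt swap_mem_rect.1 hv))
    refine ⟨ω.map transpose, hω.map_transpose, ?_⟩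
    rwa [height_map_transpose, ← energy_transpose (const K L m)]

lemma one_lt_ellStar {h : ℝ} (hh0 : 0 < h) (hh2 : h < 2) : 1 < ellStar h :=
  Nat.lt_ceil.2 (by rw [Nat.cast_one, lt_div_iff₀ hh0]; linarith)

lemma mul_ellStar_sub_one_lt {h : ℝ} (hh0 : 0 < h) : h * ((ellStar h : ℝ) - 1) < 2 := by
  have := Nat.ceil_lt_add_one (div_pos two_pos hh0).le
  rw [← lt_div_iff₀' hh0]
  unfold ellStar
  linarith

theorem path_from_quasisquare_to_m_general (q K L : ℕ) [NeZero K] [NeZero L] (h : ℝ)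
    (hh0 : 0 < h) (hh1 : h < 1)
    (hK : 3 * ellStar h ≤ K) (hKL : K ≤ L) :
    ∀ m, 2 ≤ m → m ≤ q →
      ∀ σ ∈ Rbar K L (ellStar h - 1) (ellStar h) m 1,
        ∃ ω, IsPath q K L σ (const K L m) ω ∧
          height K L h ω < Gamma h + energy K L h (const K L m) := by
  intro m hm hmq σ hσ
  have hℓ := one_lt_ellStar hh0 (by linarith)
  have hℓh := mul_ellStar_sub_one_lt hh0
  have hcast : ((ellStar h - 1 : ℕ) : ℝ) = ellStar h - 1 := Nat.cast_pred (by omega)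
  obtain ⟨ω, hω, hH⟩ := exists_path_of_rbar (q := q) hm hmq (by omega) (by omega) (by omega) hKL
    hh0 (by rwa [hcast]) hσ
  refine ⟨ω, hω, hH.trans_lt ?_⟩
  rw [hcast, Gamma]
  linear_combination hℓh

/-- from any `σ ∈ R̄_{ℓ*−1,ℓ*}(m,1)` there is a path to `𝐦` whose
maximal energy is `< 4ℓ* − h(ℓ*(ℓ*−1)+1) + H(𝐦)`. -/
theorem path_from_quasisquare_to_m (q K L : ℕ) [NeZero K] [NeZero L] (h : ℝ)
    (hq : 2 < q) (hh0 : 0 < h) (hh1 : h < 1)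
    (hhint : ¬ ∃ n : ℤ, (2 : ℝ) / h = (n : ℝ))
    (hK : 3 * ellStar h ≤ K) (hKL : K ≤ L) :
    ∀ m, 2 ≤ m → m ≤ q →
      ∀ σ ∈ Rbar K L (ellStar h - 1) (ellStar h) m 1,
        ∃ ω, IsPath q K L σ (const K L m) ω ∧
          height K L h ω < Gamma h + energy K L h (const K L m) :=
  path_from_quasisquare_to_m_general q K L h hh0 hh1 hK hKL

end PottsPos
end

section
/- For every m ∈ {2,…,q}, if η ∈ B̄^1_{ℓ*−1,ℓ*}(m,1) and η̄ is any configuration differing from η at exactly one vertex, then H(η̄) ≠ H(η); that is, every single-spin update from η strictly increases or strictly decreases the energy. -/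
/-!
Metastability for the q-state Potts model with positive external magnetic field
on the K × L torus, under Glauber (single-spin-flip) dynamics.
-/

namespace PottsPos

/-!
A single-spin update at `v` changes the energy by
`n_{σ(v)}(v) - n_s(v) - h (1{s = 1} - 1{σ(v) = 1})`. If it creates or destroys a spin `1`,
this is an integer plus or minus `h`, hence nonzero as `0 < h < 1`. Otherwise the site holds `m`
and receives a third spin, which agrees with no neighbour, so the change is `n_m(v) ≥ 0`. It
vanishes only when all four neighbours of `v` carry spin `1`, i.e. when `v` is a hole of the
droplet; but a rectangle with a one-cell protuberance that does not wrap around the torus has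
no holes.
-/

open Function

section Bonds

variable {α β : Type*} [Fintype α] [DecidableEq α]

/-- Flipping the spin at `v` only affects the two bonds `(v, τ v)` and `(τ⁻¹ v, v)`. -/
lemma sum_bond_update_sub [DecidableEq β] (τ : Equiv.Perm α) (σ : α → β) {v : α}
    (hv : τ v ≠ v) (s : β) :
    (∑ w, if update σ v s w = update σ v s (τ w) then (1 : ℝ) else 0)
      - ∑ w, (if σ w = σ (τ w) then (1 : ℝ) else 0)
      = ((if σ (τ v) = s then 1 else 0) - if σ (τ v) = σ v then 1 else 0)
        + ((if σ (τ.symm v) = s then 1 else 0) - if σ (τ.symm v) = σ v then 1 else 0) := by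
  have hv' : τ.symm v ≠ v := fun h => hv (by simpa using congrArg τ h.symm)
  rw [← Finset.sum_sub_distrib, Fintype.sum_eq_add v (τ.symm v) hv'.symm]
  · simp [hv, hv', eq_comm (a := s), eq_comm (a := σ v)]
  · rintro w ⟨hwv, hwτ⟩
    have : τ w ≠ v := fun h => hwτ (by simp [← h])
    simp [hwv, this]

lemma sum_update_sub (f : β → ℝ) (σ : α → β) (v : α) (s : β) :
    ∑ w, f (update σ v s w) - ∑ w, f (σ w) = f s - f (σ v) := by
  rw [← Finset.sum_sub_distrib, Fintype.sum_eq_single v fun w hw => by simp [hw]]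
  simp

end Bonds

section Torus

variable {K L : ℕ}

def shiftFst : Equiv.Perm (Vtx K L) := Equiv.prodCongr (Equiv.addRight 1) (Equiv.refl _)

def shiftSnd : Equiv.Perm (Vtx K L) := Equiv.prodCongr (Equiv.refl _) (Equiv.addRight 1)

lemma shiftFst_apply (v : Vtx K L) : shiftFst v = (v.1 + 1, v.2) := rfl

lemma shiftSnd_apply (v : Vtx K L) : shiftSnd v = (v.1, v.2 + 1) := rfl

lemma shiftFst_symm_apply (v : Vtx K L) : shiftFst.symm v = (v.1 - 1, v.2) := by
  ext <;> simp [shiftFst, sub_eq_add_neg]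

lemma shiftSnd_symm_apply (v : Vtx K L) : shiftSnd.symm v = (v.1, v.2 - 1) := by
  ext <;> simp [shiftSnd, sub_eq_add_neg]

lemma natCast_ne_zero_of_lt {k n : ℕ} (hk : 0 < k) (hkn : k < n) : (k : ZMod n) ≠ 0 := by
  rw [Ne, ZMod.natCast_eq_zero_iff]
  exact fun h => absurd (Nat.le_of_dvd hk h) (by omega)

lemma shiftFst_ne_self (hK : 1 < K) (v : Vtx K L) : shiftFst v ≠ v := by
  have : ((1 : ℕ) : ZMod K) ≠ 0 := natCast_ne_zero_of_lt one_pos hK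
  simpa [shiftFst_apply, Prod.ext_iff] using this

lemma shiftSnd_ne_self (hL : 1 < L) (v : Vtx K L) : shiftSnd v ≠ v := by
  have : ((1 : ℕ) : ZMod L) ≠ 0 := natCast_ne_zero_of_lt one_pos hL
  simpa [shiftSnd_apply, Prod.ext_iff] using this

lemma add_one_ne_sub_one {R : Type*} [CommRing R] (h2 : (2 : R) ≠ 0) (a : R) : a + 1 ≠ a - 1 :=
  fun h => h2 (by linear_combination h)

lemma cast_nnbr_eq (hK : 2 < K) (hL : 2 < L) (σ : Cfg K L) (v : Vtx K L) (s : ℕ) :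
    (nnbr K L σ v s : ℝ) =
      (if σ (v.1 + 1, v.2) = s then 1 else 0) + (if σ (v.1 - 1, v.2) = s then 1 else 0)
        + (if σ (v.1, v.2 + 1) = s then 1 else 0) + (if σ (v.1, v.2 - 1) = s then 1 else 0) := by
  have h1K : ((1 : ℕ) : ZMod K) ≠ 0 := natCast_ne_zero_of_lt one_pos (by omega)
  have h1L : ((1 : ℕ) : ZMod L) ≠ 0 := natCast_ne_zero_of_lt one_pos (by omega)
  have h2K : ((2 : ℕ) : ZMod K) ≠ 0 := natCast_ne_zero_of_lt two_pos hK
  have h2L : ((2 : ℕ) : ZMod L) ≠ 0 := natCast_ne_zero_of_lt two_pos hL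
  push_cast at h1K h1L h2K h2L
  have hset : {w | Adj K L v w ∧ σ w = s} =
      ↑(({(v.1 + 1, v.2), (v.1 - 1, v.2), (v.1, v.2 + 1), (v.1, v.2 - 1)} : Finset (Vtx K L))
        |>.filter (σ · = s)) := by
    ext w; simp [Adj]
  rw [nnbr, hset, Set.ncard_coe_finset, Finset.card_filter, Nat.cast_sum]
  rw [Finset.sum_insert, Finset.sum_insert, Finset.sum_insert, Finset.sum_singleton]
  · push_cast; ring
  all_goals simp [Prod.ext_iff, add_one_ne_sub_one h2K, add_one_ne_sub_one h2L, h1K, h1L]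

end Torus

section Energy

variable {K L : ℕ} [NeZero K] [NeZero L]

lemma energy_eq_bonds (h : ℝ) (σ : Cfg K L) :
    energy K L h σ = -((∑ w, if σ w = σ (shiftFst w) then (1 : ℝ) else 0)
      + ∑ w, if σ w = σ (shiftSnd w) then (1 : ℝ) else 0)
      - h * ∑ w, if σ w = 1 then (1 : ℝ) else 0 := by
  rw [energy, Finset.sum_add_distrib]
  rfl

theorem energy_update_sub (hK : 2 < K) (hL : 2 < L) (h : ℝ) (σ : Cfg K L) (v : Vtx K L)
    (s : ℕ) :
    energy K L h (update σ v s) - energy K L h σ =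
      (nnbr K L σ v (σ v) : ℝ) - nnbr K L σ v s
        - h * ((if s = 1 then 1 else 0) - if σ v = 1 then 1 else 0) := by
  have hbFst := sum_bond_update_sub shiftFst σ (shiftFst_ne_self (by omega) v) s
  have hbSnd := sum_bond_update_sub shiftSnd σ (shiftSnd_ne_self (by omega) v) s
  have hfield := sum_update_sub (fun a => if a = 1 then (1 : ℝ) else 0) σ v s
  rw [shiftFst_apply, shiftFst_symm_apply] at hbFst
  rw [shiftSnd_apply, shiftSnd_symm_apply] at hbSnd
  rw [energy_eq_bonds, energy_eq_bonds, cast_nnbr_eq hK hL, cast_nnbr_eq hK hL]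
  linear_combination -hbFst - hbSnd - h * hfield

/-- Flipping a spin to or from `1` changes the energy by an integer `± h`, never by `0`. -/
lemma energy_update_ne_of_xor (hK : 2 < K) (hL : 2 < L) {h : ℝ} (hh0 : 0 < h) (hh1 : h < 1)
    {σ : Cfg K L} {v : Vtx K L} {s : ℕ} (hx : Xor (s = 1) (σ v = 1)) :
    energy K L h (update σ v s) ≠ energy K L h σ := by
  intro hE
  have hΔ := energy_update_sub hK hL h σ v s
  rw [hE, sub_self] at hΔ
  obtain ⟨n, hn⟩ : ∃ n : ℤ, (n : ℝ) = (nnbr K L σ v (σ v) : ℝ) - nnbr K L σ v s :=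
    ⟨(nnbr K L σ v (σ v) : ℤ) - nnbr K L σ v s, by push_cast; rfl⟩
  rcases hx with ⟨hs, hv⟩ | ⟨hv, hs⟩
  · have : (n : ℝ) = h := by rw [if_pos hs, if_neg hv] at hΔ; linarith
    have h0 : 0 < n := by exact_mod_cast this ▸ hh0
    have h1 : n < 1 := by exact_mod_cast this ▸ hh1
    omega
  · have : (n : ℝ) = -h := by rw [if_neg hs, if_pos hv] at hΔ; linarith
    have h0 : n < 0 := by exact_mod_cast this ▸ (neg_neg_of_pos hh0)
    have h1 : -1 < n := by exact_mod_cast this ▸ (neg_lt_neg hh1)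
    omega

lemma energy_update_sub_of_forall_adj_ne (hK : 2 < K) (hL : 2 < L) (h : ℝ) {σ : Cfg K L}
    {v : Vtx K L} {s : ℕ} (hs : ∀ w, Adj K L v w → σ w ≠ s) (hs1 : s ≠ 1) (hv1 : σ v ≠ 1) :
    energy K L h (update σ v s) - energy K L h σ = nnbr K L σ v (σ v) := by
  have hzero : nnbr K L σ v s = 0 := by
    rw [nnbr, Set.ncard_eq_zero]
    exact Set.eq_empty_of_forall_notMem fun w hw => hs w hw.1 hw.2
  simp [energy_update_sub hK hL, hzero, hs1, hv1]

lemma forall_adj_ne_of_nnbr_eq_zero {σ : Cfg K L} {v : Vtx K L} {s : ℕ}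
    (h0 : nnbr K L σ v s = 0) : ∀ w, Adj K L v w → σ w ≠ s := by
  rw [nnbr, Set.ncard_eq_zero] at h0
  exact fun w hw hws => (Set.eq_empty_iff_forall_notMem.mp h0) w ⟨hw, hws⟩

lemma forall_adj_mem_of_energy_update_eq (hK : 2 < K) (hL : 2 < L) {h : ℝ} {η : Cfg K L}
    {A : Set (Vtx K L)} {m s : ℕ} {v : Vtx K L} (hA1 : ∀ u ∈ A, η u = 1)
    (hAm : ∀ u ∉ A, η u = m) (hm1 : m ≠ 1) (hv : v ∉ A) (hs1 : s ≠ 1) (hsm : s ≠ m)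
    (hE : energy K L h (update η v s) = energy K L h η) :
    ∀ w, Adj K L v w → w ∈ A := by
  have hηv : η v = m := hAm v hv
  have hs : ∀ w, Adj K L v w → η w ≠ s := by
    intro w _ hws
    by_cases hwA : w ∈ A
    · exact hs1 (hws ▸ hA1 w hwA)
    · exact hsm (hws ▸ hAm w hwA)
  have hΔ := energy_update_sub_of_forall_adj_ne hK hL h hs hs1 (hηv ▸ hm1)
  rw [hE, sub_self, eq_comm, Nat.cast_eq_zero] at hΔ
  intro w hw
  by_contra hwA
  exact forall_adj_ne_of_nnbr_eq_zero hΔ w hw ((hAm w hwA).trans hηv.symm)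

end Energy

section Geometry

variable {K L : ℕ}

def arc (n : ℕ) (x : ZMod n) (p : ℕ) : Set (ZMod n) := {z | ∃ i < p, z = x + i}

lemma rect_eq_prod (x : ZMod K) (y : ZMod L) (p r : ℕ) :
    rect K L x y p r = arc K x p ×ˢ arc L y r := by
  ext ⟨a, b⟩
  simp only [rect, arc, Set.mem_ofPred_eq, Set.mem_prod, Prod.mk.injEq]
  constructor
  · rintro ⟨i, j, hi, hj, ha, hb⟩
    exact ⟨⟨i, hi, ha⟩, ⟨j, hj, hb⟩⟩
  · rintro ⟨⟨i, hi, ha⟩, ⟨j, hj, hb⟩⟩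
    exact ⟨i, j, hi, hj, ha, hb⟩

/-- The bound `p + 1 < n` is sharp: for `p + 1 = n` the point missed by the arc has both
neighbours in it. -/
lemma mem_arc_of_add_one_mem_of_sub_one_mem {n p : ℕ} (hp : p + 1 < n) {x z : ZMod n}
    (hadd : z + 1 ∈ arc n x p) (hsub : z - 1 ∈ arc n x p) : z ∈ arc n x p := by
  obtain ⟨i, hi, hzi⟩ := hsub
  obtain ⟨j, hj, hzj⟩ := hadd
  have hcast : ((i + 2 : ℕ) : ZMod n) = j := by
    push_cast; linear_combination hzj - hzi
  rw [ZMod.natCast_eq_natCast_iff', Nat.mod_eq_of_lt (by omega), Nat.mod_eq_of_lt (by omega)]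
    at hcast
  exact ⟨i + 1, by omega, by push_cast; linear_combination hzi⟩

lemma mem_rect_of_forall_adj_mem_union_singleton {p r : ℕ} (hp : p + 1 < K) (hr : r + 1 < L)
    {x : ZMod K} {y : ZMod L} {c v : Vtx K L}
    (hsurr : ∀ w, Adj K L v w → w ∈ rect K L x y p r ∪ {c}) : v ∈ rect K L x y p r := by
  rw [rect_eq_prod] at hsurr ⊢
  have mem (w : Vtx K L) (hw : Adj K L v w) (hwc : w ≠ c) := (hsurr w hw).resolve_right hwc
  by_cases hc : c = (v.1 + 1, v.2) ∨ c = (v.1 - 1, v.2)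
  · -- `c` is a horizontal neighbour, so both vertical neighbours lie in the rectangle
    have h1 : (1 : ZMod K) ≠ 0 := by exact_mod_cast natCast_ne_zero_of_lt one_pos (by omega)
    have hvert (b : ZMod L) : (v.1, b) ≠ c := by
      rcases hc with rfl | rfl <;> simp [Prod.ext_iff, eq_comm (a := v.1), h1]
    have hadd := mem (v.1, v.2 + 1) (Or.inr (Or.inr (Or.inl rfl))) (hvert _)
    have hsub := mem (v.1, v.2 - 1) (Or.inr (Or.inr (Or.inr rfl))) (hvert _)
    exact ⟨hadd.1, mem_arc_of_add_one_mem_of_sub_one_mem hr hadd.2 hsub.2⟩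
  · rw [not_or] at hc
    have hadd := mem (v.1 + 1, v.2) (Or.inl rfl) (Ne.symm hc.1)
    have hsub := mem (v.1 - 1, v.2) (Or.inr (Or.inl rfl)) (Ne.symm hc.2)
    exact ⟨mem_arc_of_add_one_mem_of_sub_one_mem hp hadd.1 hsub.1, hadd.2⟩

lemma hbar_one (x : ZMod K) (y : ZMod L) : hbar K L x y 1 = {(x, y)} := by
  ext; simp [hbar]

lemma vbar_one (x : ZMod K) (y : ZMod L) : vbar K L x y 1 = {(x, y)} := by
  ext; simp [vbar]

lemma IsRectWithBar.exists_eq_rect_union_singleton {A : Set (Vtx K L)} {a b : ℕ}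
    (hA : IsRectWithBar K L A a b 1) :
    ∃ x y c, A = rect K L x y a b ∪ {c} ∨ A = rect K L x y b a ∪ {c} := by
  obtain ⟨x, y, j, -, hA | hA | hA | hA⟩ := hA <;> simp only [hbar_one, vbar_one] at hA
  exacts [⟨x, y, _, Or.inl hA⟩, ⟨x, y, _, Or.inl hA⟩, ⟨x, y, _, Or.inr hA⟩,
    ⟨x, y, _, Or.inr hA⟩]

lemma IsRectWithBar.mem_of_forall_adj_mem {A : Set (Vtx K L)} {a b : ℕ}
    (hA : IsRectWithBar K L A a b 1) (haK : a + 1 < K) (hbK : b + 1 < K) (haL : a + 1 < L)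
    (hbL : b + 1 < L) {v : Vtx K L} (hsurr : ∀ w, Adj K L v w → w ∈ A) : v ∈ A := by
  obtain ⟨x, y, c, rfl | rfl⟩ := hA.exists_eq_rect_union_singleton
  · exact Or.inl (mem_rect_of_forall_adj_mem_union_singleton haK hbL hsurr)
  · exact Or.inl (mem_rect_of_forall_adj_mem_union_singleton hbK haL hsurr)

end Geometry

theorem no_flat_move_at_saddle_general (q K L : ℕ) [NeZero K] [NeZero L] (h : ℝ)
    (hh0 : 0 < h) (hh1 : h < 1)
    (hK : 3 * ellStar h ≤ K) (hKL : K ≤ L) :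
    ∀ m, 2 ≤ m → m ≤ q →
      ∀ η ∈ Bbar K L (ellStar h - 1) (ellStar h) 1 m 1,
        ∀ η' : Cfg K L, IsConf q K L η' → Communicates K L η η' →
          energy K L h η' ≠ energy K L h η := by
  intro m hm2 _ η ⟨A, hA, hA1, hAm⟩ η' _ ⟨v, hv, hvη'⟩ hE
  have hℓ : 0 < ellStar h := Nat.ceil_pos.mpr (div_pos two_pos hh0)
  rw [← update_eq_iff.mpr ⟨rfl, hvη'⟩] at hE
  by_cases hx : Xor (η' v = 1) (η v = 1)
  · exact energy_update_ne_of_xor (by omega) (by omega) hh0 hh1 hx hE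
  have hiff : η' v = 1 ↔ η v = 1 := not_not.mp ((xor_iff_not_iff _ _).not.mp hx)
  have hηv1 : η v ≠ 1 := fun h1 => hv (h1.trans (hiff.mpr h1).symm)
  have hvA : v ∉ A := fun hvA => hηv1 (hA1 v hvA)
  have hsurr := forall_adj_mem_of_energy_update_eq (by omega) (by omega) hA1 hAm (by omega) hvA
    (mt hiff.mp hηv1) (fun hs => hv (hs.trans (hAm v hvA).symm).symm) hE
  exact hvA (hA.mem_of_forall_adj_mem (by omega) (by omega) (by omega) (by omega) hsurr)

/-- any single-spin update of a configuration in
`B̄¹_{ℓ*−1,ℓ*}(m,1)` strictly changes the energy. -/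
theorem no_flat_move_at_saddle (q K L : ℕ) [NeZero K] [NeZero L] (h : ℝ)
    (hq : 2 < q) (hh0 : 0 < h) (hh1 : h < 1)
    (hhint : ¬ ∃ n : ℤ, (2 : ℝ) / h = (n : ℝ))
    (hK : 3 * ellStar h ≤ K) (hKL : K ≤ L) :
    ∀ m, 2 ≤ m → m ≤ q →
      ∀ η ∈ Bbar K L (ellStar h - 1) (ellStar h) 1 m 1,
        ∀ η' : Cfg K L, IsConf q K L η' → Communicates K L η η' →
          energy K L h η' ≠ energy K L h η :=
  no_flat_move_at_saddle_general q K L h hh0 hh1 hK hKL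

end PottsPos
end
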